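/- arXiv:1305.6057 — 10 statements merged into one kernel-verified Lean document; each statement's English description precedes it below -/
import Mathlib

section
/- Let n ≥ 1 and let A and B be real n×n matrices. Define the adjoint operator ad_A by ad_A(X) = A·X − X·A. Then the map t ↦ exp(A + t·B) (matrix exponential) is differentiable at t = 0, and its derivative at t = 0 equals exp(A) · Σ_{k=0}^∞ ((−1)^k/(k+1)!) · ad_A^k(B), where the series converges in the space of n×n real matrices. -/
/-!
Duhamel's formula `exp x - exp a = exp a * ∫₀¹ exp (-s a) (x - a) exp (s x) ds`, applied to
`x = a + t b`, shows that `t ↦ exp (a + t b)` has derivative `exp a * ∫₀¹ exp (-s a) b exp (s a) ds`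
at `0`. Left and right multiplication by `a` commute, so `exp (-s a) b exp (s a) = exp (-s ad_a) b`,
and integrating the exponential series termwise over `[0, 1]` gives
`∑ (-1)^k / (k+1)! ad_a^k b`. This works in any real Banach algebra; the entrywise sup norm on
matrices is not submultiplicative, so the matrix case is transported along the algebra
isomorphism with the operators on Euclidean space.
-/

attribute [local instance] Matrix.normedAddCommGroup Matrix.normedSpace

open NormedSpace Set TopologicalSpace
open scoped Nat

theorem LinearMap.neg_iterate_apply {R M : Type*} [Ring R] [AddCommGroup M] [Module R M]
    (f : M →ₗ[R] M) (k : ℕ) (x : M) : (-⇑f)^[k] x = (-1 : R) ^ k • f^[k] x := by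
  induction k with
  | zero => simp
  | succ k ih =>
    rw [Function.iterate_succ_apply', ih, Pi.neg_apply, map_smul, ← Function.iterate_succ_apply' f,
      pow_succ, mul_neg_one, neg_smul]

section Calculus

variable {𝕜 E : Type*} [NontriviallyNormedField 𝕜] [NormedAddCommGroup E] [NormedSpace 𝕜 E]

theorem hasDerivAt_of_sub_eq_smul {f g : 𝕜 → E} {x : 𝕜} (hg : ContinuousAt g x)
    (hfg : ∀ t, f t - f x = (t - x) • g t) : HasDerivAt f (g x) x := by
  rw [hasDerivAt_iff_tendsto_slope]
  refine (hg.tendsto.mono_left nhdsWithin_le_nhds).congr' ?_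
  filter_upwards [self_mem_nhdsWithin] with t ht
  rw [slope_def_module, hfg, smul_smul, inv_mul_cancel₀ (sub_ne_zero.2 ht), one_smul]

theorem ContinuousLinearEquiv.comp_hasDerivAt_iff {F : Type*} [NormedAddCommGroup F]
    [NormedSpace 𝕜 F] (e : E ≃L[𝕜] F) {f : 𝕜 → E} {f' : E} {x : 𝕜} :
    HasDerivAt (fun t => e (f t)) (e f') x ↔ HasDerivAt f f' x :=
  ⟨fun h => by simpa [Function.comp_def] using e.symm.hasFDerivAt.comp_hasDerivAt x h,
    fun h => e.hasFDerivAt.comp_hasDerivAt x h⟩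

end Calculus

section BanachAlgebra

variable {𝔸 : Type*} [NormedRing 𝔸] [NormedAlgebra ℝ 𝔸]

noncomputable def ad : 𝔸 →L[ℝ] 𝔸 →L[ℝ] 𝔸 :=
  ContinuousLinearMap.mul ℝ 𝔸 - (ContinuousLinearMap.mul ℝ 𝔸).flip

@[simp]
theorem ad_apply_apply (a x : 𝔸) : ad a x = a * x - x * a := rfl

variable [CompleteSpace 𝔸]

theorem hasSum_integral_exp_smul (x : 𝔸) :
    HasSum (fun k : ℕ => ((k + 1)! : ℝ)⁻¹ • x ^ k) (∫ s in (0 : ℝ)..1, exp (s • x)) := by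
  let f : ℕ → C(ℝ, 𝔸) := fun k => ⟨fun s => ((k ! : ℝ)⁻¹ * s ^ k) • x ^ k, by fun_prop⟩
  have hf : Summable fun k => ‖(f k).restrict (⟨uIcc 0 1, isCompact_uIcc⟩ : Compacts ℝ)‖ := by
    refine (norm_expSeries_summable' (𝕂 := ℝ) x).of_nonneg_of_le (fun _ => norm_nonneg _)
      fun k => (ContinuousMap.norm_le _ (norm_nonneg _)).2 fun ⟨s, hs⟩ => ?_
    obtain ⟨hs₀, hs₁⟩ : 0 ≤ s ∧ s ≤ 1 := by simpa [uIcc_of_le zero_le_one] using hs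
    have : |s| ^ k ≤ 1 := pow_le_one₀ (abs_nonneg s) (abs_le.2 ⟨by linarith, hs₁⟩)
    simp only [ContinuousMap.restrict_apply, ContinuousMap.coe_mk, f, norm_smul, norm_mul,
      norm_pow, Real.norm_eq_abs]
    gcongr
    exact mul_le_of_le_one_right (abs_nonneg _) this
  have hterm (k : ℕ) : ∫ s in (0 : ℝ)..1, f k s = ((k + 1)! : ℝ)⁻¹ • x ^ k := by
    simp only [f, ContinuousMap.coe_mk, intervalIntegral.integral_smul_const,
      intervalIntegral.integral_const_mul, integral_pow]
    congr 1
    simp [Nat.factorial_succ]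
  have hsum (s : ℝ) : ∑' k, f k s = exp (s • x) := by
    simp [exp_eq_tsum ℝ, f, smul_pow, mul_smul]
  simpa only [hterm, hsum] using intervalIntegral.hasSum_intervalIntegral_of_summable_norm hf

theorem exp_apply_of_iterate_apply {T : 𝔸 →L[ℝ] 𝔸} {a y : 𝔸} (g : 𝔸 →L[ℝ] 𝔸)
    (h : ∀ n, T^[n] y = g (a ^ n)) : exp T y = g (exp a) := by
  rw [exp_eq_tsum ℝ, exp_eq_tsum ℝ, ← ContinuousLinearMap.apply_apply (v := y),
    ContinuousLinearMap.map_tsum _ (expSeries_summable' T), g.map_tsum (expSeries_summable' a)]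
  simp [h]

theorem exp_ad_apply (a b : 𝔸) : exp (ad a) b = exp a * b * exp (-a) := by
  -- `exp` does not depend on the choice of `ℚ`-algebra structure.
  let _ : NormedAlgebra ℚ (𝔸 →L[ℝ] 𝔸) := .restrictScalars ℚ ℝ _
  set L := ContinuousLinearMap.mul ℝ 𝔸 a
  set R := (ContinuousLinearMap.mul ℝ 𝔸).flip (-a)
  have hLR : Commute L R := by ext x; simp [L, R, mul_assoc]
  have had : ad a = L + R := by ext x; simp [L, R, sub_eq_add_neg]
  have hR : exp R b = b * exp (-a) := by
    refine exp_apply_of_iterate_apply (ContinuousLinearMap.mul ℝ 𝔸 b) fun n => ?_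
    induction n with
    | zero => simp
    | succ n ih => rw [Function.iterate_succ_apply', ih]; simp [R, pow_succ, mul_assoc]
  have hL (y : 𝔸) : exp L y = exp a * y := by
    refine exp_apply_of_iterate_apply ((ContinuousLinearMap.mul ℝ 𝔸).flip y) fun n => ?_
    induction n with
    | zero => simp
    | succ n ih => rw [Function.iterate_succ_apply', ih]; simp [L, pow_succ', mul_assoc]
  rw [had, exp_add_of_commute hLR, mul_apply_eq_comp, hR, hL, mul_assoc]

theorem hasSum_integral_exp_conj (a b : 𝔸) :
    HasSum (fun k : ℕ => ((-1 : ℝ) ^ k / (k + 1)! : ℝ) • (fun x => a * x - x * a)^[k] b)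
      (∫ s in (0 : ℝ)..1, exp (s • -a) * b * exp (s • a)) := by
  have hconj (s : ℝ) : exp (s • -a) * b * exp (s • a) = exp (s • -ad a) b := by
    rw [← map_neg, ← map_smul, exp_ad_apply, smul_neg, neg_neg]
  have hint : IntervalIntegrable (fun s : ℝ => exp (s • -ad a)) MeasureTheory.volume 0 1 :=
    (continuous_iff_continuousAt.2 fun s =>
      (hasDerivAt_exp_smul_const (-ad a) s).continuousAt).intervalIntegrable 0 1
  have hcoe : ⇑(ad a) = fun x => a * x - x * a := funext (ad_apply_apply a)
  rw [intervalIntegral.integral_congr fun s _ => hconj s,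
    ← ContinuousLinearMap.intervalIntegral_apply hint]
  have hterm (k : ℕ) : ContinuousLinearMap.apply ℝ 𝔸 b (((k + 1)! : ℝ)⁻¹ • (-ad a) ^ k)
      = ((-1 : ℝ) ^ k / (k + 1)! : ℝ) • (fun x => a * x - x * a)^[k] b := by
    have hneg := (ad a).toLinearMap.neg_iterate_apply k b
    simp only [ContinuousLinearMap.coe_coe, hcoe] at hneg
    simp [hneg, hcoe, smul_smul, div_eq_inv_mul]
  simpa only [hterm, ContinuousLinearMap.apply_apply]
    using (hasSum_integral_exp_smul (-ad a)).mapL (ContinuousLinearMap.apply ℝ 𝔸 b)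

end BanachAlgebra

section Duhamel

variable {𝔸 : Type*} [NormedRing 𝔸] [NormedAlgebra ℝ 𝔸] [NormedAlgebra ℚ 𝔸] [CompleteSpace 𝔸]

theorem exp_sub_exp_eq_mul_integral (a x : 𝔸) :
    exp x - exp a = exp a * ∫ s in (0 : ℝ)..1, exp (s • -a) * (x - a) * exp (s • x) := by
  have hderiv (s : ℝ) : HasDerivAt (fun s : ℝ => exp (s • -a) * exp (s • x))
      (exp (s • -a) * (x - a) * exp (s • x)) s := by
    convert (hasDerivAt_exp_smul_const (-a) s).fun_mul (hasDerivAt_exp_smul_const' x s) using 1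
    noncomm_ring
  rw [intervalIntegral.integral_eq_sub_of_hasDerivAt (fun s _ => hderiv s)
    (by apply Continuous.intervalIntegrable; fun_prop)]
  simp [mul_sub, ← mul_assoc, ← exp_add_of_commute (Commute.neg_right (Commute.refl a))]

theorem hasDerivAt_exp_add_smul (a b : 𝔸) :
    HasDerivAt (fun t : ℝ => exp (a + t • b))
      (exp a * ∫ s in (0 : ℝ)..1, exp (s • -a) * b * exp (s • a)) 0 := by
  let g (t : ℝ) := exp a * ∫ s in (0 : ℝ)..1, exp (s • -a) * b * exp (s • (a + t • b))
  have hg : Continuous g := by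
    refine continuous_const.mul
      (intervalIntegral.continuous_parametric_intervalIntegral_of_continuous' ?_ 0 1)
    fun_prop
  have hfg (t : ℝ) : exp (a + t • b) - exp (a + (0 : ℝ) • b) = (t - 0) • g t := by
    simp only [g, exp_sub_exp_eq_mul_integral a, sub_zero, zero_smul, add_zero, add_sub_cancel_left,
      mul_smul_comm, smul_mul_assoc, intervalIntegral.integral_smul]
  simpa [g] using hasDerivAt_of_sub_eq_smul hg.continuousAt hfg

theorem summable_and_hasDerivAt_exp_add_smul (a b : 𝔸) :
    Summable (fun k : ℕ => ((-1 : ℝ) ^ k / (k + 1)! : ℝ) • (fun x => a * x - x * a)^[k] b) ∧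
      HasDerivAt (fun t : ℝ => exp (a + t • b))
        (exp a * ∑' k : ℕ, ((-1 : ℝ) ^ k / (k + 1)! : ℝ) • (fun x => a * x - x * a)^[k] b) 0 :=
  let h := hasSum_integral_exp_conj a b
  ⟨h.summable, h.tsum_eq ▸ hasDerivAt_exp_add_smul a b⟩

end Duhamel

section Matrix

variable {𝕜 m : Type*} [RCLike 𝕜] [Fintype m] [DecidableEq m]

noncomputable def Matrix.toEuclideanCLE :
    Matrix m m 𝕜 ≃L[𝕜] (EuclideanSpace 𝕜 m →L[𝕜] EuclideanSpace 𝕜 m) :=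
  Matrix.toEuclideanCLM.toAlgEquiv.toLinearEquiv.toContinuousLinearEquiv

theorem Matrix.toEuclideanCLE_mul (A B : Matrix m m 𝕜) :
    toEuclideanCLE (A * B) = toEuclideanCLE A * toEuclideanCLE B :=
  map_mul (toEuclideanCLM (n := m) (𝕜 := 𝕜)) A B

theorem Matrix.toEuclideanCLE_exp (A : Matrix m m 𝕜) :
    toEuclideanCLE (exp A) = exp (toEuclideanCLE A) := by
  have hpow (k : ℕ) : toEuclideanCLE (A ^ k) = toEuclideanCLE A ^ k :=
    map_pow (toEuclideanCLM (n := m) (𝕜 := 𝕜)) A k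
  simp only [exp_eq_tsum 𝕜, ContinuousLinearEquiv.map_tsum, map_smul, hpow]

theorem Matrix.toEuclideanCLE_commutator_iterate (A B : Matrix m m 𝕜) (k : ℕ) :
    toEuclideanCLE ((fun X => A * X - X * A)^[k] B) =
      (fun X => toEuclideanCLE A * X - X * toEuclideanCLE A)^[k] (toEuclideanCLE B) :=
  Function.Semiconj.iterate_right (fun X => by simp [toEuclideanCLE_mul]) k B

end Matrix

theorem matrix_exp_deriv_eq_exp_mul_tsum_ad_general
    (n : ℕ) (A B : Matrix (Fin n) (Fin n) ℝ) :
    Summable (fun k : ℕ => ((-1 : ℝ) ^ k / (Nat.factorial (k + 1) : ℝ)) •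
        ((fun X => A * X - X * A)^[k] B)) ∧
    HasDerivAt (fun t : ℝ => NormedSpace.exp (A + t • B))
      (NormedSpace.exp A *
        ∑' k : ℕ, ((-1 : ℝ) ^ k / (Nat.factorial (k + 1) : ℝ)) •
          ((fun X => A * X - X * A)^[k] B)) 0 := by
  let _ : NormedAlgebra ℚ (EuclideanSpace ℝ (Fin n) →L[ℝ] EuclideanSpace ℝ (Fin n)) :=
    .restrictScalars ℚ ℝ _
  obtain ⟨hsum, hderiv⟩ :=
    summable_and_hasDerivAt_exp_add_smul (Matrix.toEuclideanCLE A) (Matrix.toEuclideanCLE B)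
  simp only [← Matrix.toEuclideanCLE_commutator_iterate, ← map_smul, ← map_add,
    ← Matrix.toEuclideanCLE_exp, ← ContinuousLinearEquiv.map_tsum, ← Matrix.toEuclideanCLE_mul]
    at hsum hderiv
  refine ⟨Matrix.toEuclideanCLE.summable.1 hsum, ?_⟩
  exact Matrix.toEuclideanCLE.comp_hasDerivAt_iff.1 hderiv

/-- The derivative at `t = 0` of `t ↦ exp (A + t B)` for real `n × n` matrices equals
`exp A * ∑_{k} ((-1)^k / (k+1)!) • ad_A^[k] B`, the series being summable. -/
theorem matrix_exp_deriv_eq_exp_mul_tsum_ad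
    (n : ℕ) (hn : 1 ≤ n) (A B : Matrix (Fin n) (Fin n) ℝ) :
    Summable (fun k : ℕ => ((-1 : ℝ) ^ k / (Nat.factorial (k + 1) : ℝ)) •
        ((fun X => A * X - X * A)^[k] B)) ∧
    HasDerivAt (fun t : ℝ => NormedSpace.exp (A + t • B))
      (NormedSpace.exp A *
        ∑' k : ℕ, ((-1 : ℝ) ^ k / (Nat.factorial (k + 1) : ℝ)) •
          ((fun X => A * X - X * A)^[k] B)) 0 :=
  matrix_exp_deriv_eq_exp_mul_tsum_ad_general n A B
end

section
/- Let m ≥ 1 and let R, J : ℝ → Matrix m m ℝ with J twice differentiable, satisfying J''(t) + R(t)·J(t) = 0 for all t ∈ ℝ, with initial conditions J(0) = 0 and J'(0) = I (the identity matrix), and suppose R(t) is a symmetric matrix for every t. Then for every t ∈ ℝ at which J(t) is invertible, the matrix U(t) := J'(t)·J(t)⁻¹ is symmetric, i.e. (J'(t)·J(t)⁻¹)ᵀ = J'(t)·J(t)⁻¹. -/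
open Matrix

attribute [local instance] Matrix.normedAddCommGroup Matrix.normedSpace

/-!
The Wronskian `W = J'ᵀ J - Jᵀ J'` of a solution of `J'' + R J = 0` has derivative
`J''ᵀ J - Jᵀ J'' = Jᵀ (R - Rᵀ) J`, which vanishes when `R` is symmetric. Hence `W` is constant,
and `J 0 = 0` makes it zero. Multiplying `J'ᵀ J = Jᵀ J'` by `(Jᵀ)⁻¹` on the left and `J⁻¹` on the
right gives `(J' J⁻¹)ᵀ = J' J⁻¹`.
-/

section Wronskian

variable {A : Type*}

def wronskian [Ring A] [Star A] (J J' : ℝ → A) (t : ℝ) : A :=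
  star (J' t) * J t - star (J t) * J' t

variable [NormedRing A] [NormedAlgebra ℝ A] [StarRing A] [StarModule ℝ A] [ContinuousStar A]
  {R J J' J'' : ℝ → A}

theorem hasDerivAt_wronskian_of_jacobi {t : ℝ} (hJ : HasDerivAt J (J' t) t)
    (hJ' : HasDerivAt J' (J'' t) t) (hJacobi : J'' t + R t * J t = 0)
    (hR : IsSelfAdjoint (R t)) :
    HasDerivAt (wronskian J J') 0 t := by
  have hJ'' : J'' t = -(R t * J t) := eq_neg_of_add_eq_zero_left hJacobi
  refine ((hJ'.star.mul hJ).sub (hJ.star.mul hJ')).congr_deriv ?_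
  rw [hJ'', star_neg, star_mul, hR.star_eq]
  noncomm_ring

theorem wronskian_eq_zero_of_jacobi (hJ : ∀ t, HasDerivAt J (J' t) t)
    (hJ' : ∀ t, HasDerivAt J' (J'' t) t) (hJacobi : ∀ t, J'' t + R t * J t = 0)
    (hR : ∀ t, IsSelfAdjoint (R t)) (hJ0 : J 0 = 0) (t : ℝ) :
    wronskian J J' t = 0 := by
  have hW := fun s => hasDerivAt_wronskian_of_jacobi (hJ s) (hJ' s) (hJacobi s) (hR s)
  rw [is_const_of_deriv_eq_zero (fun s => (hW s).differentiableAt) (fun s => (hW s).deriv) t 0,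
    wronskian, hJ0, mul_zero, star_zero, zero_mul, sub_zero]

end Wronskian

theorem Matrix.transpose_mul_nonsing_inv_eq {n α : Type*} [Fintype n] [DecidableEq n]
    [CommRing α] {A B : Matrix n n α} (h : Bᵀ * A = Aᵀ * B) (hA : IsUnit A) :
    (B * A⁻¹)ᵀ = B * A⁻¹ := by
  have hdet : IsUnit A.det := (isUnit_iff_isUnit_det A).mp hA
  have hdetT : IsUnit Aᵀ.det := by rwa [det_transpose]
  calc (B * A⁻¹)ᵀ = Aᵀ⁻¹ * (Bᵀ * A * A⁻¹) := by
        rw [transpose_mul, transpose_nonsing_inv, Matrix.mul_assoc Bᵀ, mul_nonsing_inv A hdet,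
          Matrix.mul_one]
    _ = B * A⁻¹ := by
        rw [h, Matrix.mul_assoc, ← Matrix.mul_assoc Aᵀ⁻¹, nonsing_inv_mul _ hdetT, Matrix.one_mul]

theorem jacobi_U_symmetric_general
    (m : ℕ)
    (R J J' J'' : ℝ → Matrix (Fin m) (Fin m) ℝ)
    (hJ : ∀ t : ℝ, HasDerivAt J (J' t) t)
    (hJ' : ∀ t : ℝ, HasDerivAt J' (J'' t) t)
    (hJacobi : ∀ t : ℝ, J'' t + R t * J t = 0)
    (hJ0 : J 0 = 0)
    (hRsym : ∀ t : ℝ, (R t)ᵀ = R t) :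
    ∀ t : ℝ, IsUnit (J t) → (J' t * (J t)⁻¹)ᵀ = J' t * (J t)⁻¹ := by
  -- With the Frobenius norm, `ContinuousStar` is found through `NormedStarGroup`.
  let _ : NormedRing (Matrix (Fin m) (Fin m) ℝ) := frobeniusNormedRing
  let _ : NormedAlgebra ℝ (Matrix (Fin m) (Fin m) ℝ) := frobeniusNormedAlgebra
  have hR : ∀ t, IsSelfAdjoint (R t) := fun t => by
    rw [IsSelfAdjoint, star_eq_conjTranspose, conjTranspose_eq_transpose_of_trivial, hRsym]
  intro t ht
  refine transpose_mul_nonsing_inv_eq ?_ ht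
  have hW := wronskian_eq_zero_of_jacobi hJ hJ' hJacobi hR hJ0 t
  rwa [wronskian, sub_eq_zero, star_eq_conjTranspose, star_eq_conjTranspose,
    conjTranspose_eq_transpose_of_trivial, conjTranspose_eq_transpose_of_trivial] at hW

/-- If `J` solves `J'' + R J = 0` on `ℝ` with `J 0 = 0`, `J' 0 = 1`, and `R t` symmetric for all
`t`, then at every `t` where `J t` is invertible the matrix `U t = J' t * (J t)⁻¹` is symmetric. -/
theorem jacobi_U_symmetric
    (m : ℕ) (hm : 1 ≤ m)
    (R J J' J'' : ℝ → Matrix (Fin m) (Fin m) ℝ)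
    (hJ : ∀ t : ℝ, HasDerivAt J (J' t) t)
    (hJ' : ∀ t : ℝ, HasDerivAt J' (J'' t) t)
    (hJacobi : ∀ t : ℝ, J'' t + R t * J t = 0)
    (hJ0 : J 0 = 0) (hJ'0 : J' 0 = 1)
    (hRsym : ∀ t : ℝ, (R t)ᵀ = R t) :
    ∀ t : ℝ, IsUnit (J t) → (J' t * (J t)⁻¹)ᵀ = J' t * (J t)⁻¹ :=
  jacobi_U_symmetric_general m R J J' J'' hJ hJ' hJacobi hJ0 hRsym
end

section
/- Let m ≥ 1, let I ⊆ ℝ be an open interval, and let U, R : I → Matrix m m ℝ with U differentiable on I, U(t) symmetric for every t ∈ I, and U'(t) + U(t)² + R(t) = 0 for all t ∈ I. Then the scalar function t ↦ trace(U(t)) is differentiable on I and satisfies (d/dt) trace(U(t)) + (trace U(t))²/m + trace(R(t)) ≤ 0 for all t ∈ I. -/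
open Matrix

attribute [local instance] Matrix.normedAddCommGroup Matrix.normedSpace

/-- Taking the trace of the matrix Riccati equation `U' + U² + R = 0` with `U` symmetric yields the
scalar Riccati inequality `(trace U)' + (trace U)²/m + trace R ≤ 0` on the open interval `I`. -/
theorem trace_riccati_inequality
    (m : ℕ) (hm : 1 ≤ m) (I : Set ℝ) (hIopen : IsOpen I) (hIinterval : I.OrdConnected)
    (U U' R : ℝ → Matrix (Fin m) (Fin m) ℝ)
    (hU : ∀ t ∈ I, HasDerivAt U (U' t) t)
    (hUsym : ∀ t ∈ I, (U t)ᵀ = U t)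
    (hRiccati : ∀ t ∈ I, U' t + U t * U t + R t = 0) :
    ∀ t ∈ I,
      HasDerivAt (fun τ => (U τ).trace) ((U' t).trace) t ∧
        (U' t).trace + (U t).trace ^ 2 / (m : ℝ) + (R t).trace ≤ 0 := by
  intro t ht
  constructor
  · exact ((Matrix.traceLinearMap (Fin m) ℝ ℝ).toContinuousLinearMap.hasFDerivAt.comp_hasDerivAt
      t (hU t ht))
  · have hm0 : (0 : ℝ) < (m : ℝ) := by exact_mod_cast hm
    have hR := hRiccati t ht
    have htr : (U' t).trace + ((U t * U t)).trace + (R t).trace = 0 := by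
      rw [← Matrix.trace_add, ← Matrix.trace_add, hR, Matrix.trace_zero]
    -- trace (U*U) = ∑ i j, (U t i j)^2
    have hsym := hUsym t ht
    have htrUU : (U t * U t).trace = ∑ i, ∑ j, (U t i j) ^ 2 := by
      simp only [Matrix.trace, Matrix.diag, Matrix.mul_apply]
      refine Finset.sum_congr rfl fun i _ => Finset.sum_congr rfl fun j _ => ?_
      have : U t j i = U t i j := by
        conv_lhs => rw [← hsym, Matrix.transpose_apply]
      rw [this, sq]
    have hdiag : ∑ i, (U t i i) ^ 2 ≤ ∑ i, ∑ j, (U t i j) ^ 2 := by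
      refine Finset.sum_le_sum fun i _ => ?_
      exact Finset.single_le_sum (f := fun j => (U t i j) ^ 2) (fun j _ => sq_nonneg _) (Finset.mem_univ i)
    have hcs : (U t).trace ^ 2 ≤ (m : ℝ) * ∑ i, (U t i i) ^ 2 := by
      have := sq_sum_le_card_mul_sum_sq (s := (Finset.univ : Finset (Fin m)))
        (f := fun i => U t i i)
      simpa [Matrix.trace, Matrix.diag] using this
    have key : (U t).trace ^ 2 / (m : ℝ) ≤ (U t * U t).trace := by
      rw [div_le_iff₀ hm0, htrUU]
      calc (U t).trace ^ 2 ≤ (m : ℝ) * ∑ i, (U t i i) ^ 2 := hcs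
        _ ≤ (m : ℝ) * ∑ i, ∑ j, (U t i j) ^ 2 := by
            exact mul_le_mul_of_nonneg_left hdiag hm0.le
        _ = (∑ i, ∑ j, (U t i j) ^ 2) * (m : ℝ) := mul_comm _ _
    linarith
end

section
/- Let N > 1, T > 0 and let u : (0,T) → ℝ be differentiable with u'(t) + u(t)²/(N−1) ≤ 0 for all t ∈ (0,T), and suppose that t·u(t) → N−1 as t → 0⁺. Then u(t) ≤ (N−1)/t for all t ∈ (0,T). -/
/-!
With `c = N - 1`, the function `g t = t * (t * u t - c)` has derivative
`2 t u + t² u' - c ≤ 2 t u - t² u² / c - c = -(t u - c)² / c ≤ 0`,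
so it is antitone on `(0, T)`.
The limit hypothesis says `g t → 0` as `t → 0⁺`, hence `g ≤ 0`, i.e. `t u(t) ≤ c`.
-/

open Set Filter Topology

lemma mul_mul_sub_deriv_nonpos_of_riccati {c t v v' : ℝ} (hc : 0 < c) (h : v' + v ^ 2 / c ≤ 0) :
    (t * v - c) + t * (v + t * v') ≤ 0 := by
  have h_complete_sq :
      (t * v - c) + t * (v + t * v') = t ^ 2 * (v' + v ^ 2 / c) - (t * v - c) ^ 2 / c := by
    field_simp
    ring
  rw [h_complete_sq]
  have := mul_nonpos_of_nonneg_of_nonpos (sq_nonneg t) h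
  linarith [div_nonneg (sq_nonneg (t * v - c)) hc.le]

lemma antitoneOn_mul_mul_sub_of_riccati {a b c : ℝ} (hc : 0 < c) {u u' : ℝ → ℝ}
    (hu : ∀ t ∈ Ioo a b, HasDerivAt u (u' t) t)
    (hineq : ∀ t ∈ Ioo a b, u' t + u t ^ 2 / c ≤ 0) :
    AntitoneOn (fun t => t * (t * u t - c)) (Ioo a b) := by
  have hg : ∀ t ∈ Ioo a b,
      HasDerivAt (fun t => t * (t * u t - c)) ((t * u t - c) + t * (u t + t * u' t)) t := by
    intro t ht
    exact ((hasDerivAt_id' t).mul (((hasDerivAt_id' t).mul (hu t ht)).sub_const c)).congr_deriv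
      (by simp only [Pi.mul_apply]; ring)
  refine antitoneOn_of_hasDerivWithinAt_nonpos (convex_Ioo a b)
    (fun t ht => (hg t ht).continuousAt.continuousWithinAt)
    (fun t ht => (hg t (interior_subset ht)).hasDerivWithinAt) fun t ht => ?_
  exact mul_mul_sub_deriv_nonpos_of_riccati hc (hineq t (interior_subset ht))

lemma AntitoneOn.le_of_tendsto_nhdsGT {g : ℝ → ℝ} {a b l : ℝ} (hg : AntitoneOn g (Ioo a b))
    (hlim : Tendsto g (𝓝[>] a) (𝓝 l)) {t : ℝ} (ht : t ∈ Ioo a b) : g t ≤ l := by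
  refine ge_of_tendsto hlim ?_
  filter_upwards [Ioo_mem_nhdsGT ht.1] with s hs
  exact hg ⟨hs.1, hs.2.trans ht.2⟩ ht hs.2.le

theorem riccati_comparison_flat_general
    (N T : ℝ) (hN : 1 < N)
    (u u' : ℝ → ℝ)
    (hu : ∀ t ∈ Set.Ioo 0 T, HasDerivAt u (u' t) t)
    (hineq : ∀ t ∈ Set.Ioo 0 T, u' t + (u t) ^ 2 / (N - 1) ≤ 0)
    (hlim : Filter.Tendsto (fun t => t * u t) (nhdsWithin 0 (Set.Ioi 0)) (nhds (N - 1))) :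
    ∀ t ∈ Set.Ioo 0 T, u t ≤ (N - 1) / t := by
  intro t ht
  have hc : 0 < N - 1 := sub_pos.mpr hN
  have hg_lim : Tendsto (fun t => t * (t * u t - (N - 1))) (𝓝[>] 0) (𝓝 0) := by
    simpa using (tendsto_nhdsWithin_of_tendsto_nhds tendsto_id).mul (hlim.sub_const (N - 1))
  have hg_nonpos : t * (t * u t - (N - 1)) ≤ 0 :=
    (antitoneOn_mul_mul_sub_of_riccati hc hu hineq).le_of_tendsto_nhdsGT hg_lim ht
  rw [le_div_iff₀ ht.1, mul_comm]
  exact sub_nonpos.mp (nonpos_of_mul_nonpos_right hg_nonpos ht.1)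

/-- Riccati comparison in the flat case: if `u' + u²/(N-1) ≤ 0` on `(0,T)` and `t·u(t) → N-1`
as `t → 0⁺`, then `u(t) ≤ (N-1)/t` on `(0,T)`. -/
theorem riccati_comparison_flat
    (N T : ℝ) (hN : 1 < N) (hT : 0 < T)
    (u u' : ℝ → ℝ)
    (hu : ∀ t ∈ Set.Ioo 0 T, HasDerivAt u (u' t) t)
    (hineq : ∀ t ∈ Set.Ioo 0 T, u' t + (u t) ^ 2 / (N - 1) ≤ 0)
    (hlim : Filter.Tendsto (fun t => t * u t) (nhdsWithin 0 (Set.Ioi 0)) (nhds (N - 1))) :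
    ∀ t ∈ Set.Ioo 0 T, u t ≤ (N - 1) / t :=
  riccati_comparison_flat_general N T hN u u' hu hineq hlim
end

section
/- Fix ε ≥ 0 and p̄ = (p̄_x, p̄_y, p̄_z) ∈ ℝ³ with p̄_z ≠ 0. Define, for t ∈ ℝ: x(t) = (p̄_y/p̄_z)(cos(p̄_z t) − 1) + (p̄_x/p̄_z) sin(p̄_z t), y(t) = −(p̄_x/p̄_z)(cos(p̄_z t) − 1) + (p̄_y/p̄_z) sin(p̄_z t), z(t) = ε² p̄_z t + ((p̄_x² + p̄_y²)/(2 p̄_z)) (t − sin(p̄_z t)/p̄_z), and p_x(t) = p̄_x − (p̄_z/2) y(t), p_y(t) = p̄_y + (p̄_z/2) x(t), p_z(t) = p̄_z. Then (x,y,z)(0) = (0,0,0), (p_x,p_y,p_z)(0) = p̄, and for every t ∈ ℝ the following differential equations hold: x'(t) = p_x(t) − y(t) p_z(t)/2; y'(t) = p_y(t) + x(t) p_z(t)/2; z'(t) = −(p_x(t) − y(t) p_z(t)/2) y(t)/2 + (p_y(t) + x(t) p_z(t)/2) x(t)/2 + ε² p_z(t); p_x'(t) = −(p_y(t) + x(t)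 p_z(t)/2) p_z(t)/2; p_y'(t) = (p_x(t) − y(t) p_z(t)/2) p_z(t)/2; p_z'(t) = 0. -/
/-! The projection `(x, y)` of the geodesic is the circle through the origin traversed with
angular velocity `p̄_z` and initial velocity `(p̄_x, p̄_y)`, so `(x', y')` is `(p̄_x, p̄_y)`
rotated by the angle `p̄_z t`; in these terms `p_x - y p_z / 2 = x'` and `p_y + x p_z / 2 = y'`.
The `z`-equation says that `z' - ε² p̄_z` is the areal velocity `(x y' - y x') / 2`, which on
this circle equals `(p̄_x² + p̄_y²)(1 - cos (p̄_z t)) / (2 p̄_z)`. -/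

open Real

/-- Abscissa of the circle through the origin with angular velocity `c` and initial velocity
`(a, b)`; its ordinate is `planarArc b (-a) c`. -/
noncomputable def planarArc (a b c t : ℝ) : ℝ :=
  b / c * (cos (c * t) - 1) + a / c * sin (c * t)

section PlanarArc

variable (a b : ℝ) {c : ℝ}

theorem planarArc_zero : planarArc a b c 0 = 0 := by
  simp [planarArc]

theorem hasDerivAt_planarArc (hc : c ≠ 0) (t : ℝ) :
    HasDerivAt (planarArc a b c) (a * cos (c * t) - b * sin (c * t)) t := by
  have hct : HasDerivAt (fun t => c * t) c t := by simpa using (hasDerivAt_id t).const_mul c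
  refine (((hct.cos.sub_const 1).const_mul (b / c)).add
    (hct.sin.const_mul (a / c))).congr_deriv ?_
  field_simp
  ring

theorem planarArc_areal_velocity (hc : c ≠ 0) (t : ℝ) :
    planarArc a b c t * (b * cos (c * t) + a * sin (c * t))
      - planarArc b (-a) c t * (a * cos (c * t) - b * sin (c * t))
      = (a ^ 2 + b ^ 2) / c * (1 - cos (c * t)) := by
  unfold planarArc
  field_simp
  linear_combination (a ^ 2 + b ^ 2) * sin_sq_add_cos_sq (c * t)

end PlanarArc

theorem hasDerivAt_heisenberg_height (k r : ℝ) {c : ℝ} (hc : c ≠ 0) (t : ℝ) :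
    HasDerivAt (fun t => k * c * t + r / (2 * c) * (t - sin (c * t) / c))
      (k * c + r / (2 * c) * (1 - cos (c * t))) t := by
  have hct : HasDerivAt (fun t => c * t) c t := by simpa using (hasDerivAt_id t).const_mul c
  refine (((hasDerivAt_id' t).const_mul (k * c)).add
    (((hasDerivAt_id' t).sub (hct.sin.div_const c)).const_mul _)).congr_deriv ?_
  field_simp

theorem heisenberg_hamiltonian_system_general
    (ε : ℝ)
    (px0 py0 pz0 : ℝ) (hpz0 : pz0 ≠ 0)
    (x y z px py pz : ℝ → ℝ)
    (hx : ∀ t, x t = (py0 / pz0) * (Real.cos (pz0 * t) - 1) + (px0 / pz0) * Real.sin (pz0 * t))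
    (hy : ∀ t, y t = -(px0 / pz0) * (Real.cos (pz0 * t) - 1) + (py0 / pz0) * Real.sin (pz0 * t))
    (hz : ∀ t, z t = ε ^ 2 * pz0 * t +
      ((px0 ^ 2 + py0 ^ 2) / (2 * pz0)) * (t - Real.sin (pz0 * t) / pz0))
    (hpx : ∀ t, px t = px0 - (pz0 / 2) * y t)
    (hpy : ∀ t, py t = py0 + (pz0 / 2) * x t)
    (hpz : ∀ t, pz t = pz0) :
    (x 0 = 0 ∧ y 0 = 0 ∧ z 0 = 0) ∧
    (px 0 = px0 ∧ py 0 = py0 ∧ pz 0 = pz0) ∧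
    ∀ t : ℝ,
      HasDerivAt x (px t - y t * pz t / 2) t ∧
      HasDerivAt y (py t + x t * pz t / 2) t ∧
      HasDerivAt z (-(px t - y t * pz t / 2) * y t / 2
        + (py t + x t * pz t / 2) * x t / 2 + ε ^ 2 * pz t) t ∧
      HasDerivAt px (-(py t + x t * pz t / 2) * pz t / 2) t ∧
      HasDerivAt py ((px t - y t * pz t / 2) * pz t / 2) t ∧
      HasDerivAt pz 0 t := by
  have hx_arc : x = planarArc px0 py0 pz0 := funext hx
  have hy_arc : y = planarArc py0 (-px0) pz0 := funext fun t => by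
    rw [hy, planarArc, neg_div]
  subst hx_arc hy_arc
  have hpx_eq : ∀ t, px t - planarArc py0 (-px0) pz0 t * pz t / 2
      = px0 * cos (pz0 * t) - py0 * sin (pz0 * t) := fun t => by
    rw [hpx, hpz, planarArc]
    field_simp
    ring
  have hpy_eq : ∀ t, py t + planarArc px0 py0 pz0 t * pz t / 2
      = py0 * cos (pz0 * t) + px0 * sin (pz0 * t) := fun t => by
    rw [hpy, hpz, planarArc]
    field_simp
    ring
  refine ⟨⟨planarArc_zero _ _, planarArc_zero _ _, by simp [hz]⟩,
    ⟨by simp [hpx, planarArc_zero], by simp [hpy, planarArc_zero], hpz 0⟩, fun t => ?_⟩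
  have hx' := hasDerivAt_planarArc px0 py0 hpz0 t
  have hy' := hasDerivAt_planarArc py0 (-px0) hpz0 t
  rw [hpx_eq, hpy_eq, hpz]
  refine ⟨hx', by simpa using hy', ?_, ?_, ?_, funext hpz ▸ hasDerivAt_const t pz0⟩
  · rw [funext hz]
    refine (hasDerivAt_heisenberg_height (ε ^ 2) (px0 ^ 2 + py0 ^ 2) hpz0 t).congr_deriv ?_
    linear_combination (-1 / 2 : ℝ) * planarArc_areal_velocity px0 py0 hpz0 t
  · rw [funext hpx]
    exact ((hy'.const_mul (pz0 / 2)).const_sub px0).congr_deriv (by ring)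
  · rw [funext hpy]
    exact ((hx'.const_mul (pz0 / 2)).const_add py0).congr_deriv (by ring)

/-- The explicit curves solve the Hamiltonian system of the left-invariant Riemannian metric
`g_ε` on the Heisenberg group, with initial conditions `(x,y,z)(0) = 0` and `p(0) = p̄`. -/
theorem heisenberg_hamiltonian_system
    (ε : ℝ) (hε : 0 ≤ ε)
    (px0 py0 pz0 : ℝ) (hpz0 : pz0 ≠ 0)
    (x y z px py pz : ℝ → ℝ)
    (hx : ∀ t, x t = (py0 / pz0) * (Real.cos (pz0 * t) - 1) + (px0 / pz0) * Real.sin (pz0 * t))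
    (hy : ∀ t, y t = -(px0 / pz0) * (Real.cos (pz0 * t) - 1) + (py0 / pz0) * Real.sin (pz0 * t))
    (hz : ∀ t, z t = ε ^ 2 * pz0 * t +
      ((px0 ^ 2 + py0 ^ 2) / (2 * pz0)) * (t - Real.sin (pz0 * t) / pz0))
    (hpx : ∀ t, px t = px0 - (pz0 / 2) * y t)
    (hpy : ∀ t, py t = py0 + (pz0 / 2) * x t)
    (hpz : ∀ t, pz t = pz0) :
    (x 0 = 0 ∧ y 0 = 0 ∧ z 0 = 0) ∧
    (px 0 = px0 ∧ py 0 = py0 ∧ pz 0 = pz0) ∧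
    ∀ t : ℝ,
      HasDerivAt x (px t - y t * pz t / 2) t ∧
      HasDerivAt y (py t + x t * pz t / 2) t ∧
      HasDerivAt z (-(px t - y t * pz t / 2) * y t / 2
        + (py t + x t * pz t / 2) * x t / 2 + ε ^ 2 * pz t) t ∧
      HasDerivAt px (-(py t + x t * pz t / 2) * pz t / 2) t ∧
      HasDerivAt py ((px t - y t * pz t / 2) * pz t / 2) t ∧
      HasDerivAt pz 0 t :=
  heisenberg_hamiltonian_system_general ε px0 py0 pz0 hpz0 x y z px py pz hx hy hz hpx hpy hpz
end

section
/- Fix ε ≥ 0 and define, for ρ ∈ ℝ and p_z ∈ (0, 2π): e_ρ(ρ, p_z) = ρ · sin(p_z/2)/(p_z/2) and e_z(ρ, p_z) = ε² p_z + (ρ²/(2 p_z)) · (1 − sin(p_z)/p_z). Then for every ρ ∈ ℝ and p_z ∈ (0, 2π), the Jacobian determinant (∂e_ρ/∂ρ)(∂e_z/∂p_z) − (∂e_ρ/∂p_z)(∂e_z/∂ρ) equals ε² · sin(p_z/2)/(p_z/2) + (2ρ²/p_z³) · (sin(p_z/2) − (p_z/2) cos(p_z/2)). -/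
/-!
Writing `f p = sin (p / 2) / (p / 2)` and `g p = (1 - sin p / p) / (2 p)`, the map is
`(ρ, p) ↦ (ρ f p, ε² p + ρ² g p)`, whose Jacobian is `ε² f + ρ² (f g' - 2 f' g)` for any
`f`, `g`.
The double-angle formulas `sin p = 2 s c`, `cos p = 1 - 2 s²` (with `s, c` at `p / 2`) together
with `s² + c² = 1` collapse `f g' - 2 f' g` to `(2 / p³) (s - (p / 2) c)`.
-/

open Real

theorem jacobian_linear_quadratic {f g : ℝ → ℝ} {f' g' : ℝ} (c ρ : ℝ) {p : ℝ}
    (hf : HasDerivAt f f' p) (hg : HasDerivAt g g' p) :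
    deriv (fun r => r * f p) ρ * deriv (fun q => c * q + ρ ^ 2 * g q) p -
        deriv (fun q => ρ * f q) p * deriv (fun r => c * p + r ^ 2 * g p) ρ =
      c * f p + ρ ^ 2 * (f p * g' - 2 * f' * g p) := by
  have hρ : HasDerivAt (fun r => r ^ 2) (2 * ρ) ρ := by simpa using hasDerivAt_pow 2 ρ
  have hq : HasDerivAt (fun q => c * q + ρ ^ 2 * g q) (c * 1 + ρ ^ 2 * g') p :=
    ((hasDerivAt_id' p).const_mul c).add (hg.const_mul (ρ ^ 2))
  rw [((hasDerivAt_id' ρ).mul_const (f p)).deriv, hq.deriv,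
    (hf.const_mul ρ).deriv, ((hρ.mul_const (g p)).const_add (c * p)).deriv]
  ring

theorem hasDerivAt_sin_half_div_half {p : ℝ} (hp : p ≠ 0) :
    HasDerivAt (fun q => sin (q / 2) / (q / 2))
      ((cos (p / 2) * p - 2 * sin (p / 2)) / p ^ 2) p := by
  have hhalf : HasDerivAt (fun q : ℝ => q / 2) (1 / 2) p := (hasDerivAt_id' p).div_const 2
  refine (((hasDerivAt_sin (p / 2)).comp p hhalf).fun_div hhalf
    (div_ne_zero hp two_ne_zero)).congr_deriv ?_
  simp only [Function.comp_apply]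
  field_simp

theorem hasDerivAt_one_sub_sin_div_div_two_mul {p : ℝ} (hp : p ≠ 0) :
    HasDerivAt (fun q => (1 - sin q / q) / (2 * q))
      ((2 * sin p - p * cos p - p) / (2 * p ^ 3)) p := by
  have hsinc : HasDerivAt (fun q => 1 - sin q / q) (0 - (cos p * p - sin p * 1) / p ^ 2) p :=
    (hasDerivAt_const p 1).sub ((hasDerivAt_sin p).div (hasDerivAt_id' p) hp)
  refine (hsinc.fun_div ((hasDerivAt_id' p).const_mul 2)
    (mul_ne_zero two_ne_zero hp)).congr_deriv ?_
  field_simp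
  ring

theorem sin_half_div_half_bracket_eq {p : ℝ} (hp : p ≠ 0) :
    sin (p / 2) / (p / 2) * ((2 * sin p - p * cos p - p) / (2 * p ^ 3)) -
        2 * ((cos (p / 2) * p - 2 * sin (p / 2)) / p ^ 2) * ((1 - sin p / p) / (2 * p)) =
      2 / p ^ 3 * (sin (p / 2) - p / 2 * cos (p / 2)) := by
  have hsin : sin p = 2 * sin (p / 2) * cos (p / 2) := by
    rw [← sin_two_mul, mul_div_cancel₀ p two_ne_zero]
  have hcos : cos p = 1 - 2 * sin (p / 2) ^ 2 := by
    rw [← cos_two_mul_eq_one_sub, mul_div_cancel₀ p two_ne_zero]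
  rw [hsin, hcos]
  field_simp
  linear_combination 2 * p * sin (p / 2) * sin_sq_add_cos_sq (p / 2)

theorem heisenberg_exp_jacobian_general
    (ε : ℝ)
    (eρ ez : ℝ → ℝ → ℝ)
    (heρ : ∀ ρ pz : ℝ, eρ ρ pz = ρ * (Real.sin (pz / 2) / (pz / 2)))
    (hez : ∀ ρ pz : ℝ, ez ρ pz = ε ^ 2 * pz + (ρ ^ 2 / (2 * pz)) * (1 - Real.sin pz / pz)) :
    ∀ ρ : ℝ, ∀ pz ∈ Set.Ioo (0 : ℝ) (2 * Real.pi),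
      deriv (fun r => eρ r pz) ρ * deriv (fun p => ez ρ p) pz -
          deriv (fun p => eρ ρ p) pz * deriv (fun r => ez r pz) ρ =
        ε ^ 2 * (Real.sin (pz / 2) / (pz / 2)) +
          (2 * ρ ^ 2 / pz ^ 3) * (Real.sin (pz / 2) - (pz / 2) * Real.cos (pz / 2)) := by
  intro ρ pz hpz
  have hp : pz ≠ 0 := hpz.1.ne'
  obtain rfl : eρ = fun r q => r * (sin (q / 2) / (q / 2)) := funext₂ heρ
  obtain rfl : ez = fun r q => ε ^ 2 * q + r ^ 2 * ((1 - sin q / q) / (2 * q)) :=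
    funext₂ fun r q => (hez r q).trans (by ring)
  rw [jacobian_linear_quadratic _ ρ (hasDerivAt_sin_half_div_half hp)
    (hasDerivAt_one_sub_sin_div_div_two_mul hp), sin_half_div_half_bracket_eq hp]
  ring

/-- The Jacobian determinant of the exponential mapping of the metric `g_ε` on the Heisenberg
group, in cylindrical coordinates. -/
theorem heisenberg_exp_jacobian
    (ε : ℝ) (hε : 0 ≤ ε)
    (eρ ez : ℝ → ℝ → ℝ)
    (heρ : ∀ ρ pz : ℝ, eρ ρ pz = ρ * (Real.sin (pz / 2) / (pz / 2)))
    (hez : ∀ ρ pz : ℝ, ez ρ pz = ε ^ 2 * pz + (ρ ^ 2 / (2 * pz)) * (1 - Real.sin pz / pz)) :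
    ∀ ρ : ℝ, ∀ pz ∈ Set.Ioo (0 : ℝ) (2 * Real.pi),
      deriv (fun r => eρ r pz) ρ * deriv (fun p => ez ρ p) pz -
          deriv (fun p => eρ ρ p) pz * deriv (fun r => ez r pz) ρ =
        ε ^ 2 * (Real.sin (pz / 2) / (pz / 2)) +
          (2 * ρ ^ 2 / pz ^ 3) * (Real.sin (pz / 2) - (pz / 2) * Real.cos (pz / 2)) :=
  heisenberg_exp_jacobian_general ε eρ ez heρ hez
end

section
/- Define h, k : (0, π) → ℝ by h(λ) = sin(λ)/λ and k(λ) = sin(λ) − λ·cos(λ). Then the function λ ↦ h(λ)·k(λ)/λ³ is positive on (0, π) and strictly decreasing on (0, π): for all 0 < λ₁ < λ₂ < π one has h(λ₂)k(λ₂)/λ₂³ < h(λ₁)k(λ₁)/λ₁³. -/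
/-!
Write `h k / x³ = (sin x / x) · (k x / x³)`. Both factors are positive and strictly decreasing
on `(0, π]`: `(sin x / x)' = -k x / x²` and `(k x / x³)' = -m x / x⁴` with
`m x = (3 - x²) sin x - 3 x cos x`. Positivity of `k` and `m` follows from `k 0 = m 0 = 0`,
`k' x = x sin x > 0` and `m' x = x k x > 0`.
-/

open Real Set

theorem StrictAntiOn.mul_of_nonneg {α β : Type*} [Preorder α] [MulZeroClass β] [Preorder β]
    [PosMulStrictMono β] [MulPosMono β] {f g : α → β} {s : Set α}
    (hf : StrictAntiOn f s) (hg : StrictAntiOn g s)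
    (hf₀ : ∀ x ∈ s, 0 ≤ f x) (hg₀ : ∀ x ∈ s, 0 ≤ g x) :
    StrictAntiOn (fun x => f x * g x) s :=
  fun _ hx _ hy hxy => mul_lt_mul'' (hf hx hy hxy) (hg hx hy hxy) (hf₀ _ hy) (hg₀ _ hy)

theorem pos_of_eq_zero_of_hasDerivAt_pos {f f' : ℝ → ℝ} {a b x : ℝ}
    (hf : ContinuousOn f (Icc a b)) (hf' : ∀ y ∈ Ioo a b, HasDerivAt f (f' y) y)
    (hf'₀ : ∀ y ∈ Ioo a b, 0 < f' y) (ha : f a = 0) (hx : x ∈ Ioc a b) : 0 < f x := by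
  have hmono : StrictMonoOn f (Icc a b) := by
    refine strictMonoOn_of_hasDerivWithinAt_pos (f' := f') (convex_Icc a b) hf (fun y hy => ?_) ?_
    · rw [interior_Icc] at hy
      exact (hf' y hy).hasDerivWithinAt
    · rwa [interior_Icc]
  simpa [ha] using hmono (left_mem_Icc.2 (hx.1.le.trans hx.2)) (Ioc_subset_Icc_self hx) hx.1

theorem hasDerivAt_sin_sub_mul_cos (x : ℝ) :
    HasDerivAt (fun x => sin x - x * cos x) (x * sin x) x :=
  ((hasDerivAt_sin x).sub ((hasDerivAt_id' x).mul (hasDerivAt_cos x))).congr_deriv (by ring)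

theorem hasDerivAt_three_sub_sq_mul_sin_sub (x : ℝ) :
    HasDerivAt (fun x => (3 - x ^ 2) * sin x - 3 * x * cos x) (x * (sin x - x * cos x)) x := by
  have hsq : HasDerivAt (fun x : ℝ => 3 - x ^ 2) (-(2 * x)) x := by
    simpa using (hasDerivAt_pow 2 x).const_sub 3
  exact ((hsq.mul (hasDerivAt_sin x)).sub
    (((hasDerivAt_id' x).const_mul 3).mul (hasDerivAt_cos x))).congr_deriv (by ring)

theorem sin_sub_mul_cos_pos {x : ℝ} (hx₀ : 0 < x) (hxπ : x ≤ π) : 0 < sin x - x * cos x :=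
  pos_of_eq_zero_of_hasDerivAt_pos (f := fun x => sin x - x * cos x)
    (by fun_prop) (fun y _ => hasDerivAt_sin_sub_mul_cos y)
    (fun y hy => mul_pos hy.1 (sin_pos_of_pos_of_lt_pi hy.1 hy.2)) (by simp) ⟨hx₀, hxπ⟩

theorem three_sub_sq_mul_sin_sub_pos {x : ℝ} (hx₀ : 0 < x) (hxπ : x ≤ π) :
    0 < (3 - x ^ 2) * sin x - 3 * x * cos x :=
  pos_of_eq_zero_of_hasDerivAt_pos (f := fun x => (3 - x ^ 2) * sin x - 3 * x * cos x)
    (by fun_prop) (fun y _ => hasDerivAt_three_sub_sq_mul_sin_sub y)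
    (fun y hy => mul_pos hy.1 (sin_sub_mul_cos_pos hy.1 hy.2.le)) (by simp) ⟨hx₀, hxπ⟩

theorem strictAntiOn_sin_div : StrictAntiOn (fun x => sin x / x) (Ioc 0 π) := by
  refine strictAntiOn_of_hasDerivWithinAt_neg (convex_Ioc 0 π)
    (continuous_sin.continuousOn.div continuousOn_id fun x hx => hx.1.ne')
    (f' := fun x => -(sin x - x * cos x) / x ^ 2) (fun x hx => ?_) (fun x hx => ?_)
  all_goals rw [interior_Ioc] at hx
  · exact (((hasDerivAt_sin x).div (hasDerivAt_id' x) hx.1.ne').congr_deriv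
      (by ring)).hasDerivWithinAt
  · exact div_neg_of_neg_of_pos (neg_neg_of_pos (sin_sub_mul_cos_pos hx.1 hx.2.le))
      (pow_pos hx.1 2)

theorem strictAntiOn_sin_sub_mul_cos_div_cube :
    StrictAntiOn (fun x => (sin x - x * cos x) / x ^ 3) (Ioc 0 π) := by
  refine strictAntiOn_of_hasDerivWithinAt_neg (convex_Ioc 0 π)
    ((by fun_prop : Continuous fun x => sin x - x * cos x).continuousOn.div
      (continuous_pow 3).continuousOn fun x hx => pow_ne_zero 3 hx.1.ne')
    (f' := fun x => -((3 - x ^ 2) * sin x - 3 * x * cos x) / x ^ 4)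
    (fun x hx => ?_) (fun x hx => ?_)
  all_goals rw [interior_Ioc] at hx
  · have hx₀ : x ≠ 0 := hx.1.ne'
    refine (((hasDerivAt_sin_sub_mul_cos x).div (hasDerivAt_pow 3 x)
      (pow_ne_zero 3 hx₀)).congr_deriv ?_).hasDerivWithinAt
    field_simp
    ring
  · exact div_neg_of_neg_of_pos
      (neg_neg_of_pos (three_sub_sq_mul_sin_sub_pos hx.1 hx.2.le)) (pow_pos hx.1 4)

/-- With `h(λ) = sin λ / λ` and `k(λ) = sin λ - λ cos λ`, the function `λ ↦ h(λ)k(λ)/λ³` is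
positive and strictly decreasing on `(0, π)`. -/
theorem hk_div_cube_pos_and_strictAntiOn
    (h k : ℝ → ℝ)
    (hh : ∀ x : ℝ, h x = Real.sin x / x)
    (hk : ∀ x : ℝ, k x = Real.sin x - x * Real.cos x) :
    (∀ x ∈ Set.Ioo (0 : ℝ) Real.pi, 0 < h x * k x / x ^ 3) ∧
      StrictAntiOn (fun x : ℝ => h x * k x / x ^ 3) (Set.Ioo (0 : ℝ) Real.pi) := by
  have hfactor : (fun x : ℝ => h x * k x / x ^ 3) =
      fun x => sin x / x * ((sin x - x * cos x) / x ^ 3) :=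
    funext fun x => by rw [hh, hk, mul_div_assoc]
  have hsin_div_pos : ∀ x ∈ Ioo 0 π, 0 < sin x / x :=
    fun x hx => div_pos (sin_pos_of_pos_of_lt_pi hx.1 hx.2) hx.1
  have hk_div_pos : ∀ x ∈ Ioo 0 π, 0 < (sin x - x * cos x) / x ^ 3 :=
    fun x hx => div_pos (sin_sub_mul_cos_pos hx.1 hx.2.le) (pow_pos hx.1 3)
  refine ⟨fun x hx => ?_, ?_⟩
  · rw [congrFun hfactor x]
    exact mul_pos (hsin_div_pos x hx) (hk_div_pos x hx)
  · rw [hfactor]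
    exact (strictAntiOn_sin_div.mono Ioo_subset_Ioc_self).mul_of_nonneg
      (strictAntiOn_sin_sub_mul_cos_div_cube.mono Ioo_subset_Ioc_self)
      (fun x hx => (hsin_div_pos x hx).le) (fun x hx => (hk_div_pos x hx).le)
end

section
/- Define h, k : (0, π) → ℝ by h(λ) = sin(λ)/λ and k(λ) = sin(λ) − λ·cos(λ). Then for every ε ≥ 0, every ρ > 0, every s ∈ (0,1) and every p_z ∈ (0, 2π), one has s³·ρ·h(s·p_z/2)·( ε²·h(s·p_z/2) + (2ρ²/(s·p_z³))·k(s·p_z/2) ) ≥ s⁵·ρ·h(p_z/2)·( ε²·h(p_z/2) + (2ρ²/p_z³)·k(p_z/2) ). -/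
/-!
Put `λ = p_z / 2 ∈ (0, π)`. Both `sin λ / λ` and `(sin λ - λ cos λ) / λ³` are antitone on
`(0, π]`: the first because `sin` is concave with `sin 0 = 0`, the second because its derivative
has the sign of `λ² sin λ - 3 (sin λ - λ cos λ)`, a function vanishing at `0` whose derivative
`-λ (sin λ - λ cos λ)` is nonpositive. Hence `h (s λ) ≥ h λ ≥ s² h λ ≥ 0` and
`k (s λ) ≥ s³ k λ ≥ 0`, and the inequality follows term by term.
-/

open Real Set

lemma nonneg_of_hasDerivAt_nonneg {f f' : ℝ → ℝ} {b x : ℝ} (hf0 : f 0 = 0)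
    (hf : ∀ t, HasDerivAt f (f' t) t) (hf' : ∀ t ∈ Ioo 0 b, 0 ≤ f' t) (hx : x ∈ Icc 0 b) :
    0 ≤ f x := by
  have hmono : MonotoneOn f (Icc 0 b) :=
    monotoneOn_of_hasDerivWithinAt_nonneg (convex_Icc 0 b)
      (fun t _ => (hf t).continuousAt.continuousWithinAt)
      (fun t _ => (hf t).hasDerivWithinAt) (by rwa [interior_Icc])
  simpa [hf0] using hmono (left_mem_Icc.2 (hx.1.trans hx.2)) hx hx.1

namespace Real

lemma hasDerivAt_sin_sub_mul_cos (x : ℝ) :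
    HasDerivAt (fun t => sin t - t * cos t) (x * sin x) x :=
  ((hasDerivAt_sin x).sub ((hasDerivAt_id x).mul (hasDerivAt_cos x))).congr_deriv <| by
    simp only [id_eq]
    ring

lemma hasDerivAt_three_mul_sin_sub_mul_cos_sub_sq_mul_sin (x : ℝ) :
    HasDerivAt (fun t => 3 * (sin t - t * cos t) - t ^ 2 * sin t)
      (x * (sin x - x * cos x)) x :=
  (((hasDerivAt_sin_sub_mul_cos x).const_mul 3).sub
    ((hasDerivAt_pow 2 x).mul (hasDerivAt_sin x))).congr_deriv <| by
    norm_num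
    ring

lemma sin_sub_mul_cos_nonneg {x : ℝ} (hx : x ∈ Icc 0 π) : 0 ≤ sin x - x * cos x :=
  nonneg_of_hasDerivAt_nonneg (f := fun t => sin t - t * cos t) (by simp)
    hasDerivAt_sin_sub_mul_cos
    (fun t ht => mul_nonneg ht.1.le (sin_nonneg_of_nonneg_of_le_pi ht.1.le ht.2.le)) hx

lemma sq_mul_sin_le_three_mul_sin_sub_mul_cos {x : ℝ} (hx : x ∈ Icc 0 π) :
    x ^ 2 * sin x ≤ 3 * (sin x - x * cos x) :=
  sub_nonneg.1 <| nonneg_of_hasDerivAt_nonneg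
    (f := fun t => 3 * (sin t - t * cos t) - t ^ 2 * sin t) (by simp)
    hasDerivAt_three_mul_sin_sub_mul_cos_sub_sq_mul_sin
    (fun t ht => mul_nonneg ht.1.le (sin_sub_mul_cos_nonneg (Ioo_subset_Icc_self ht))) hx

lemma antitoneOn_sin_div : AntitoneOn (fun x => sin x / x) (Ioc 0 π) := by
  intro x hx y hy hxy
  have hsecant := strictConcaveOn_sin_Icc.concaveOn.neg.secant_mono
    (left_mem_Icc.2 pi_pos.le) (Ioc_subset_Icc_self hx) (Ioc_subset_Icc_self hy)
    hx.1.ne' hy.1.ne' hxy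
  simp only [Pi.neg_apply, sin_zero, neg_zero, sub_zero, neg_div] at hsecant
  exact neg_le_neg_iff.1 hsecant

lemma antitoneOn_sin_sub_mul_cos_div_pow_three :
    AntitoneOn (fun x => (sin x - x * cos x) / x ^ 3) (Ioc 0 π) := by
  refine antitoneOn_of_hasDerivWithinAt_nonpos (convex_Ioc 0 π)
    (f' := fun x => (x * sin x * x ^ 3 - (sin x - x * cos x) * (3 * x ^ 2)) / (x ^ 3) ^ 2)
    (fun x hx => ((hasDerivAt_sin_sub_mul_cos x).div (hasDerivAt_pow 3 x)
      (pow_ne_zero 3 hx.1.ne')).continuousAt.continuousWithinAt) ?_ ?_ <;> rw [interior_Ioc]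
  · intro x hx
    refine ((hasDerivAt_sin_sub_mul_cos x).div (hasDerivAt_pow 3 x)
      (pow_ne_zero 3 hx.1.ne')).hasDerivWithinAt.congr_deriv ?_
    norm_num
  · intro x hx
    have hkey := sq_mul_sin_le_three_mul_sin_sub_mul_cos (Ioo_subset_Icc_self hx)
    have hx2 : 0 < x ^ 2 := pow_pos hx.1 2
    refine div_nonpos_of_nonpos_of_nonneg ?_ (sq_nonneg _)
    nlinarith

end Real

theorem heisenberg_distortion_inequality_general
    (h k : ℝ → ℝ)
    (hh : ∀ x : ℝ, h x = Real.sin x / x)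
    (hk : ∀ x : ℝ, k x = Real.sin x - x * Real.cos x)
    (ε : ℝ)
    (ρ : ℝ) (hρ : 0 < ρ)
    (s : ℝ) (hs : s ∈ Set.Ioo (0 : ℝ) 1)
    (pz : ℝ) (hpz : pz ∈ Set.Ioo (0 : ℝ) (2 * Real.pi)) :
    s ^ 3 * ρ * h (s * pz / 2) *
        (ε ^ 2 * h (s * pz / 2) + (2 * ρ ^ 2 / (s * pz ^ 3)) * k (s * pz / 2)) ≥
      s ^ 5 * ρ * h (pz / 2) *
        (ε ^ 2 * h (pz / 2) + (2 * ρ ^ 2 / pz ^ 3) * k (pz / 2)) := by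
  obtain ⟨hs0, hs1⟩ := hs
  have hl : pz / 2 ∈ Ioc 0 π := ⟨by linarith [hpz.1], by linarith [hpz.2]⟩
  set l := pz / 2
  have hsl_le : s * l ≤ l := mul_le_of_le_one_left hl.1.le hs1.le
  have hsl : s * l ∈ Ioc 0 π := ⟨mul_pos hs0 hl.1, hsl_le.trans hl.2⟩
  have hh_le : h l ≤ h (s * l) := by simpa only [hh] using antitoneOn_sin_div hsl hl hsl_le
  have hh_nonneg : 0 ≤ h l := by
    rw [hh]; exact div_nonneg (sin_nonneg_of_nonneg_of_le_pi hl.1.le hl.2) hl.1.le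
  have hk_le : s ^ 3 * k l ≤ k (s * l) := by
    have hanti := antitoneOn_sin_sub_mul_cos_div_pow_three hsl hl hsl_le
    rw [div_le_div_iff₀ (pow_pos hl.1 3) (pow_pos hsl.1 3), mul_pow, ← hk, ← hk] at hanti
    nlinarith [pow_pos hl.1 3]
  have hk_nonneg : 0 ≤ k l := hk l ▸ sin_sub_mul_cos_nonneg (Ioc_subset_Icc_self hl)
  rw [show s * pz / 2 = s * l by ring, ge_iff_le]
  calc s ^ 5 * ρ * h l * (ε ^ 2 * h l + 2 * ρ ^ 2 / pz ^ 3 * k l)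
      = s ^ 3 * ρ * h l * (ε ^ 2 * (s ^ 2 * h l) + 2 * ρ ^ 2 / (s * pz ^ 3) * (s ^ 3 * k l)) := by
        field_simp
    _ ≤ s ^ 3 * ρ * h (s * l) * (ε ^ 2 * h (s * l) + 2 * ρ ^ 2 / (s * pz ^ 3) * k (s * l)) := by
        have hh_scaled : s ^ 2 * h l ≤ h (s * l) :=
          (mul_le_of_le_one_left hh_nonneg (pow_le_one₀ hs0.le hs1.le)).trans hh_le
        have hh_sl_nonneg : 0 ≤ h (s * l) := hh_nonneg.trans hh_le
        have hpz0 := hpz.1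
        gcongr

/-- The pointwise volume-distortion estimate yielding `MCP(0,5)` for the Heisenberg group with
the left-invariant metric `g_ε` (and, for `ε = 0`, its canonical sub-Riemannian metric). -/
theorem heisenberg_distortion_inequality
    (h k : ℝ → ℝ)
    (hh : ∀ x : ℝ, h x = Real.sin x / x)
    (hk : ∀ x : ℝ, k x = Real.sin x - x * Real.cos x)
    (ε : ℝ) (hε : 0 ≤ ε)
    (ρ : ℝ) (hρ : 0 < ρ)
    (s : ℝ) (hs : s ∈ Set.Ioo (0 : ℝ) 1)
    (pz : ℝ) (hpz : pz ∈ Set.Ioo (0 : ℝ) (2 * Real.pi)) :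
    s ^ 3 * ρ * h (s * pz / 2) *
        (ε ^ 2 * h (s * pz / 2) + (2 * ρ ^ 2 / (s * pz ^ 3)) * k (s * pz / 2)) ≥
      s ^ 5 * ρ * h (pz / 2) *
        (ε ^ 2 * h (pz / 2) + (2 * ρ ^ 2 / pz ^ 3) * k (pz / 2)) :=
  heisenberg_distortion_inequality_general h k hh hk ε ρ hρ s hs pz hpz
end

section
/- Let L be a finite-dimensional real Lie algebra, let s ≥ 1 be an integer, and let V₁, …, V_s be linear subspaces of L with L = V₁ ⊕ ⋯ ⊕ V_s and [V_i, V_j] ⊆ V_{i+j} for all i, j ≥ 1, where V_l := {0} for l ≥ s+1. Let c : ℝ → L be a smooth (C^∞) curve with c(0) = 0 such that for every t ∈ ℝ, Σ_{k=0}^{s−1} ((−1)^k/(k+1)!) · ad_{c(t)}^k( c'(t) ) ∈ V₁. Then for every integer k ≥ 0 and every integer r ≥ 1, the (k+r)-th derivative at t = 0 of the curve t ↦ ad_{c(t)}^k( c'(t) ) belongs to the subspace V₁ + V₂ + ⋯ + V_{k+r}. -/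
open scoped ContDiff
open Finset

section AuxLemmas

variable {E F G : Type*} [NormedAddCommGroup E] [NormedSpace ℝ E]
  [NormedAddCommGroup F] [NormedSpace ℝ F] [NormedAddCommGroup G] [NormedSpace ℝ G]

private lemma aux_natCast_le_inf (n : ℕ) : (n : WithTop ℕ∞) ≤ ∞ := by
  exact_mod_cast le_top

private lemma aux_contDiff_iteratedDeriv {u : ℝ → E} (hu : ContDiff ℝ ∞ u) (m : ℕ) :
    ContDiff ℝ ∞ (iteratedDeriv m u) := by
  rw [iteratedDeriv_eq_iterate]
  exact hu.iterate_deriv m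

private lemma aux_hasDerivAt_iteratedDeriv {u : ℝ → E} (hu : ContDiff ℝ ∞ u) (m : ℕ) (t : ℝ) :
    HasDerivAt (iteratedDeriv m u) (iteratedDeriv (m + 1) u t) t := by
  rw [iteratedDeriv_succ]
  exact (((aux_contDiff_iteratedDeriv hu m).differentiable
    (by simp)) t).hasDerivAt

/-- Leibniz formula for a continuous bilinear map. -/
private lemma aux_leibniz (B : E →L[ℝ] F →L[ℝ] G) {u : ℝ → E} {v : ℝ → F}
    (hu : ContDiff ℝ ∞ u) (hv : ContDiff ℝ ∞ v) (n : ℕ) (t : ℝ) :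
    iteratedDeriv n (fun x => B (u x) (v x)) t
      = ∑ j ∈ Finset.range (n + 1),
          (n.choose j : ℝ) • B (iteratedDeriv j u t) (iteratedDeriv (n - j) v t) := by
  induction n generalizing t with
  | zero => simp
  | succ n ih =>
    have hZd : ∀ (j m : ℕ), HasDerivAt
        (fun x => B (iteratedDeriv j u x) (iteratedDeriv m v x))
        (B (iteratedDeriv (j + 1) u t) (iteratedDeriv m v t)
          + B (iteratedDeriv j u t) (iteratedDeriv (m + 1) v t)) t := by
      intro j m
      have h1 : HasDerivAt (fun x => B (iteratedDeriv j u x))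
          (B (iteratedDeriv (j + 1) u t)) t :=
        B.hasFDerivAt.comp_hasDerivAt t (aux_hasDerivAt_iteratedDeriv hu j t)
      exact h1.clm_apply (aux_hasDerivAt_iteratedDeriv hv m t)
    have hfn : iteratedDeriv n (fun x => B (u x) (v x))
        = fun x => ∑ j ∈ Finset.range (n + 1),
            (n.choose j : ℝ) • B (iteratedDeriv j u x) (iteratedDeriv (n - j) v x) :=
      funext fun x => ih x
    rw [iteratedDeriv_succ, hfn]
    have hder : deriv (fun x => ∑ j ∈ Finset.range (n + 1),
          (n.choose j : ℝ) • B (iteratedDeriv j u x) (iteratedDeriv (n - j) v x)) t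
        = ∑ j ∈ Finset.range (n + 1), (n.choose j : ℝ) •
            (B (iteratedDeriv (j + 1) u t) (iteratedDeriv (n - j) v t)
              + B (iteratedDeriv j u t) (iteratedDeriv (n - j + 1) v t)) := by
      refine (HasDerivAt.fun_sum ?_).deriv
      intro j _
      exact (hZd j (n - j)).const_smul ((n.choose j : ℝ))
    rw [hder]
    have hY : ∀ j ∈ Finset.range (n + 1), (n.choose j : ℝ) •
          (B (iteratedDeriv (j + 1) u t) (iteratedDeriv (n - j) v t)
            + B (iteratedDeriv j u t) (iteratedDeriv (n - j + 1) v t))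
        = (n.choose j : ℝ) • B (iteratedDeriv (j + 1) u t) (iteratedDeriv (n + 1 - (j + 1)) v t)
          + (n.choose j : ℝ) • B (iteratedDeriv j u t) (iteratedDeriv (n + 1 - j) v t) := by
      intro j hj
      rw [Finset.mem_range, Nat.lt_succ_iff] at hj
      rw [smul_add, Nat.succ_sub_succ, Nat.succ_sub hj]
    rw [Finset.sum_congr rfl hY, Finset.sum_add_distrib]
    rw [Finset.sum_range_succ' (fun j => ((n + 1).choose j : ℝ) •
      B (iteratedDeriv j u t) (iteratedDeriv (n + 1 - j) v t)) (n + 1)]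
    have hsplit : ∀ j ∈ Finset.range (n + 1),
        ((n + 1).choose (j + 1) : ℝ) •
          B (iteratedDeriv (j + 1) u t) (iteratedDeriv (n + 1 - (j + 1)) v t)
        = (n.choose j : ℝ) •
            B (iteratedDeriv (j + 1) u t) (iteratedDeriv (n + 1 - (j + 1)) v t)
          + (n.choose (j + 1) : ℝ) •
            B (iteratedDeriv (j + 1) u t) (iteratedDeriv (n + 1 - (j + 1)) v t) := by
      intro j _
      rw [Nat.choose_succ_succ]
      push_cast
      rw [add_smul]
    rw [Finset.sum_congr rfl hsplit, Finset.sum_add_distrib]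
    have hshift : ∑ j ∈ Finset.range (n + 1),
          (n.choose j : ℝ) • B (iteratedDeriv j u t) (iteratedDeriv (n + 1 - j) v t)
        = ∑ j ∈ Finset.range (n + 1), (n.choose (j + 1) : ℝ) •
            B (iteratedDeriv (j + 1) u t) (iteratedDeriv (n + 1 - (j + 1)) v t)
          + ((n + 1).choose 0 : ℝ) •
            B (iteratedDeriv 0 u t) (iteratedDeriv (n + 1 - 0) v t) := by
      have h1 := Finset.sum_range_succ' (fun j => (n.choose j : ℝ) •
        B (iteratedDeriv j u t) (iteratedDeriv (n + 1 - j) v t)) (n + 1)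
      have h2 := Finset.sum_range_succ (fun j => (n.choose j : ℝ) •
        B (iteratedDeriv j u t) (iteratedDeriv (n + 1 - j) v t)) (n + 1)
      rw [h2] at h1
      simp only [Nat.choose_succ_self, Nat.cast_zero, zero_smul, add_zero] at h1
      rw [h1]
      simp [Nat.choose_zero_right]
    rw [hshift]
    abel

private lemma aux_iteratedDeriv_add {u v : ℝ → E} (hu : ContDiff ℝ ∞ u)
    (hv : ContDiff ℝ ∞ v) (n : ℕ) (t : ℝ) :
    iteratedDeriv n (fun x => u x + v x) t = iteratedDeriv n u t + iteratedDeriv n v t := by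
  simp only [← iteratedDerivWithin_univ]
  exact iteratedDerivWithin_add (Set.mem_univ t) uniqueDiffOn_univ
    ((hu.of_le (aux_natCast_le_inf n)).contDiffWithinAt)
    ((hv.of_le (aux_natCast_le_inf n)).contDiffWithinAt)

private lemma aux_iteratedDeriv_neg (u : ℝ → E) (n : ℕ) (t : ℝ) :
    iteratedDeriv n (fun x => -u x) t = -iteratedDeriv n u t :=
  iteratedDeriv_neg n u t

private lemma aux_iteratedDeriv_sub {u v : ℝ → E} (hu : ContDiff ℝ ∞ u)
    (hv : ContDiff ℝ ∞ v) (n : ℕ) (t : ℝ) :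
    iteratedDeriv n (fun x => u x - v x) t = iteratedDeriv n u t - iteratedDeriv n v t := by
  have : (fun x => u x - v x) = fun x => u x + -v x := by funext x; rw [sub_eq_add_neg]
  rw [this, aux_iteratedDeriv_add hu hv.neg, aux_iteratedDeriv_neg, sub_eq_add_neg]

private lemma aux_iteratedDeriv_smul (a : ℝ) {u : ℝ → E} (hu : ContDiff ℝ ∞ u)
    (n : ℕ) (t : ℝ) :
    iteratedDeriv n (fun x => a • u x) t = a • iteratedDeriv n u t := by
  simp only [← iteratedDerivWithin_univ]
  exact iteratedDerivWithin_const_smul (Set.mem_univ t) uniqueDiffOn_univ a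
    ((hu.of_le (aux_natCast_le_inf n)).contDiffWithinAt)

private lemma aux_iteratedDeriv_sum {ι : Type*} (sf : Finset ι) (f : ι → ℝ → E)
    (hf : ∀ i ∈ sf, ContDiff ℝ ∞ (f i)) (n : ℕ) (t : ℝ) :
    iteratedDeriv n (fun x => ∑ i ∈ sf, f i x) t = ∑ i ∈ sf, iteratedDeriv n (f i) t := by
  classical
  induction sf using Finset.cons_induction with
  | empty =>
    simp only [Finset.sum_empty]
    rw [iteratedDeriv_eq_iteratedFDeriv, iteratedFDeriv_zero_fun]
    simp
  | cons i sf' hnot ih =>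
    simp only [Finset.sum_cons]
    rw [aux_iteratedDeriv_add (hf i (Finset.mem_cons_self i sf'))
      (ContDiff.sum fun j hj => hf j (Finset.mem_cons_of_mem hj)),
      ih (fun j hj => hf j (Finset.mem_cons_of_mem hj))]

/-- A smooth curve lying in a submodule of a finite-dimensional space has all its
iterated derivatives in that submodule. -/
private lemma aux_iteratedDeriv_mem {L : Type*} [NormedAddCommGroup L] [NormedSpace ℝ L]
    [FiniteDimensional ℝ L] (p : Submodule ℝ L) {u : ℝ → L}
    (hu : ContDiff ℝ ∞ u) (hmem : ∀ t, u t ∈ p) (n : ℕ) (t : ℝ) :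
    iteratedDeriv n u t ∈ p := by
  induction n generalizing u with
  | zero => simpa using hmem t
  | succ n ih =>
    rw [iteratedDeriv_succ']
    refine ih (contDiff_infty_iff_deriv.mp hu).2 ?_
    intro x
    obtain ⟨q, hq⟩ := Submodule.exists_isCompl p
    set π : L →L[ℝ] L :=
      LinearMap.toContinuousLinearMap (p.subtype.comp (p.projectionOnto q hq)) with hπ
    have hπmem : ∀ y, π y ∈ p := fun y => (p.projectionOnto q hq y).2
    have hπid : ∀ y, y ∈ p → π y = y := by
      intro y hy
      show ((p.projectionOnto q hq y : p) : L) = y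
      rw [show y = ((⟨y, hy⟩ : p) : L) from rfl,
        Submodule.projectionOnto_apply_left hq]
    have hd : HasDerivAt u (deriv u x) x :=
      ((hu.differentiable (by simp)) x).hasDerivAt
    have hcomp : HasDerivAt (fun y => π (u y)) (π (deriv u x)) x :=
      π.hasFDerivAt.comp_hasDerivAt x hd
    have heq : (fun y => π (u y)) = u := funext fun y => hπid _ (hmem y)
    rw [heq] at hcomp
    rw [hd.unique hcomp]
    exact hπmem _

end AuxLemmas

/-- In a stratified (Carnot) Lie algebra `L = V₁ ⊕ ⋯ ⊕ V_s` with `[V_i, V_j] ⊆ V_{i+j}`, if a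
smooth curve `c` with `c 0 = 0` satisfies the normal geodesic constraint
`∑_{k=0}^{s-1} ((-1)^k/(k+1)!) ad_{c(t)}^[k] (c'(t)) ∈ V₁` for all `t`, then the `(k+r)`-th
derivative at `0` of `t ↦ ad_{c(t)}^[k] (c'(t))` lies in `V₁ + ⋯ + V_{k+r}`. -/
theorem iteratedDeriv_ad_pow_mem_graded
    (L : Type*) [NormedAddCommGroup L] [NormedSpace ℝ L] [FiniteDimensional ℝ L]
    (bracket : L →ₗ[ℝ] L →ₗ[ℝ] L)
    (halt : ∀ v : L, bracket v v = 0)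
    (hjacobi : ∀ u v w : L,
      bracket u (bracket v w) + bracket v (bracket w u) + bracket w (bracket u v) = 0)
    (s : ℕ) (hs : 1 ≤ s) (V : ℕ → Submodule ℝ L)
    (hdirect : DirectSum.IsInternal (fun i : Fin s => V (i.1 + 1)))
    (htriv : ∀ l : ℕ, s + 1 ≤ l → V l = ⊥)
    (hgrading : ∀ i j : ℕ, 1 ≤ i → 1 ≤ j → ∀ x ∈ V i, ∀ y ∈ V j, bracket x y ∈ V (i + j))
    (c : ℝ → L) (hc : ContDiff ℝ (⊤ : ℕ∞) c) (hc0 : c 0 = 0)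
    (hconstraint : ∀ t : ℝ,
      (∑ k ∈ Finset.range s, ((-1 : ℝ) ^ k / (Nat.factorial (k + 1) : ℝ)) •
        ((fun w => bracket (c t) w)^[k] (deriv c t))) ∈ V 1) :
    ∀ k r : ℕ, 1 ≤ r →
      iteratedDeriv (k + r) (fun t => (fun w => bracket (c t) w)^[k] (deriv c t)) 0 ∈
        ⨆ i ∈ Finset.Icc 1 (k + r), V i := by
  classical
  have hcinf : ContDiff ℝ ∞ c := ContDiff.of_le hc (by simp)
  have hdc : ContDiff ℝ ∞ (deriv c) := (contDiff_infty_iff_deriv.mp hcinf).2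
  -- the bracket as a continuous bilinear map
  let Bc : L →L[ℝ] L →L[ℝ] L := LinearMap.toContinuousLinearMap
    { toFun := fun x => LinearMap.toContinuousLinearMap (bracket x)
      map_add' := fun x y => by ext w; simp
      map_smul' := fun a x => by ext w; simp }
  have hBc : ∀ x y : L, Bc x y = bracket x y := fun x y => rfl
  -- the curves `g k`
  set g : ℕ → ℝ → L := fun k t => (fun w => bracket (c t) w)^[k] (deriv c t) with hgdef
  have hgrec : ∀ k t, g (k + 1) t = bracket (c t) (g k t) := fun k t =>
    Function.iterate_succ_apply' _ k _
  -- smoothness of iterated bracket curves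
  have hAsmooth : ∀ (u : ℝ → L), ContDiff ℝ ∞ u → ∀ k : ℕ,
      ContDiff ℝ ∞ (fun t => (fun w => bracket (c t) w)^[k] (u t)) := by
    intro u hu k
    induction k with
    | zero => simpa using hu
    | succ k ih =>
      have hfun : (fun t => (fun w => bracket (c t) w)^[k + 1] (u t))
          = fun t => Bc (c t) ((fun w => bracket (c t) w)^[k] (u t)) :=
        funext fun t => Function.iterate_succ_apply' _ k _
      rw [hfun]
      exact (Bc.contDiff.comp hcinf).clm_apply ih
  have hgsmooth : ∀ k, ContDiff ℝ ∞ (g k) := fun k => hAsmooth _ hdc k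
  -- the filtration `W`
  set W : ℕ → Submodule ℝ L := fun n => ⨆ i ∈ Finset.Icc 1 n, V i with hWdef
  have hWmono : ∀ {m n : ℕ}, m ≤ n → W m ≤ W n := by
    intro m n h
    refine biSup_mono fun i hi => ?_
    rw [Finset.mem_Icc] at hi ⊢
    omega
  have hVW : ∀ {i n : ℕ}, 1 ≤ i → i ≤ n → V i ≤ W n := fun {i n} h1 h2 =>
    le_biSup _ (Finset.mem_Icc.2 ⟨h1, h2⟩)
  have hbrW : ∀ (a b : ℕ) (x y : L), x ∈ W a → y ∈ W b → bracket x y ∈ W (a + b) := by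
    intro a b x y hx hy
    have hle : Submodule.map₂ bracket (W a) (W b) ≤ W (a + b) := by
      show Submodule.map₂ bracket (⨆ i, ⨆ _ : i ∈ Finset.Icc 1 a, V i)
        (⨆ j, ⨆ _ : j ∈ Finset.Icc 1 b, V j) ≤ W (a + b)
      rw [Submodule.map₂_iSup_left]
      refine iSup_le fun i => ?_
      rw [Submodule.map₂_iSup_left]
      refine iSup_le fun hi => ?_
      rw [Submodule.map₂_iSup_right]
      refine iSup_le fun j => ?_
      rw [Submodule.map₂_iSup_right]
      refine iSup_le fun hj => ?_
      rw [Finset.mem_Icc] at hi hj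
      refine Submodule.map₂_le.2 fun x hx y hy => ?_
      exact hVW (by omega) (by omega) (hgrading i j hi.1 hj.1 x hx y hy)
    exact hle (Submodule.apply_mem_map₂ bracket hx hy)
  -- the weight function
  set e : ℕ → ℕ := fun n => if n ≤ 1 then n else n - 1 with hedef
  have he_le : ∀ n, e n ≤ n := by intro n; simp only [hedef]; split_ifs <;> omega
  -- Leibniz formula for the bracket of two smooth curves
  have hleib : ∀ (u v : ℝ → L), ContDiff ℝ ∞ u → ContDiff ℝ ∞ v → ∀ (n : ℕ) (t : ℝ),
      iteratedDeriv n (fun x => bracket (u x) (v x)) t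
        = ∑ j ∈ Finset.range (n + 1), (n.choose j : ℝ) •
            bracket (iteratedDeriv j u t) (iteratedDeriv (n - j) v t) := by
    intro u v hu hv n t
    exact aux_leibniz Bc hu hv n t
  -- main iterate lemma
  have hAmem : ∀ (N : ℕ), (∀ j, j ≤ N → iteratedDeriv j c 0 ∈ W (e j)) →
      ∀ (u : ℝ → L), ContDiff ℝ ∞ u → (∀ m, m ≤ N → iteratedDeriv m u 0 ∈ W m) →
      ∀ (k n : ℕ), n ≤ N →
        iteratedDeriv n (fun t => (fun w => bracket (c t) w)^[k] (u t)) 0 ∈ W n := by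
    intro N hcD u hu hmem k
    induction k with
    | zero => intro n hn; simpa using hmem n hn
    | succ k ih =>
      intro n hn
      have hAk : ContDiff ℝ ∞ (fun t => (fun w => bracket (c t) w)^[k] (u t)) :=
        hAsmooth u hu k
      have hfun : (fun t => (fun w => bracket (c t) w)^[k + 1] (u t))
          = fun t => bracket (c t) ((fun w => bracket (c t) w)^[k] (u t)) :=
        funext fun t => Function.iterate_succ_apply' _ k _
      rw [hfun, hleib c _ hcinf hAk n 0]
      refine Submodule.sum_mem _ fun j hj => ?_
      rw [Finset.mem_range, Nat.lt_succ_iff] at hj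
      refine Submodule.smul_mem _ _ ?_
      rcases Nat.eq_zero_or_pos j with rfl | hj1
      · simp only [iteratedDeriv_zero, hc0, map_zero, LinearMap.zero_apply]
        exact Submodule.zero_mem _
      · have h1 : iteratedDeriv j c 0 ∈ W (e j) := hcD j (le_trans hj hn)
        have h2 : iteratedDeriv (n - j) (fun t => (fun w => bracket (c t) w)^[k] (u t)) 0
            ∈ W (n - j) := ih (n - j) (le_trans (Nat.sub_le n j) hn)
        refine hWmono ?_ (hbrW _ _ _ _ h1 h2)
        have := he_le j
        omega
  -- the auxiliary curve `h = [c, c']`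
  set h : ℝ → L := fun t => bracket (c t) (deriv c t) with hhdef
  have hhsmooth : ContDiff ℝ ∞ h := (Bc.contDiff.comp hcinf).clm_apply hdc
  have hhmem : ∀ (N : ℕ), (∀ j, j ≤ N → iteratedDeriv j c 0 ∈ W (e j)) →
      ∀ m, m ≤ N → iteratedDeriv m h 0 ∈ W m := by
    intro N hcD m hm
    rw [hhdef, hleib c (deriv c) hcinf hdc m 0]
    refine Submodule.sum_mem _ fun j hj => ?_
    rw [Finset.mem_range, Nat.lt_succ_iff] at hj
    refine Submodule.smul_mem _ _ ?_
    have hDv : iteratedDeriv (m - j) (deriv c) 0 = iteratedDeriv (m - j + 1) c 0 := by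
      rw [iteratedDeriv_succ']
    rcases Nat.eq_zero_or_pos j with rfl | hj1
    · simp only [iteratedDeriv_zero, hc0, map_zero, LinearMap.zero_apply]
      exact Submodule.zero_mem _
    · rw [hDv]
      by_cases hcase : j = 1 ∧ m = 1
      · obtain ⟨rfl, rfl⟩ := hcase
        have : iteratedDeriv 1 c 0 = iteratedDeriv (1 - 1 + 1) c 0 := by norm_num
        rw [← this, halt]
        exact Submodule.zero_mem _
      · have h1 : iteratedDeriv j c 0 ∈ W (e j) := hcD j (le_trans hj hm)
        have h2 : iteratedDeriv (m - j + 1) c 0 ∈ W (e (m - j + 1)) :=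
          hcD _ (by omega)
        refine hWmono ?_ (hbrW _ _ _ _ h1 h2)
        simp only [hedef]
        split_ifs <;> omega
  -- derivatives of c at 0
  have keyA : ∀ n, iteratedDeriv n c 0 ∈ W (e n) := by
    intro n
    induction n using Nat.strong_induction_on with
    | _ n IH =>
      match n with
      | 0 =>
        simp only [iteratedDeriv_zero, hc0]
        exact Submodule.zero_mem _
      | (n + 1) =>
        have hcD : ∀ j, j ≤ n → iteratedDeriv j c 0 ∈ W (e j) := fun j hj =>
          IH j (by omega)
        set a : ℕ → ℝ := fun k => (-1 : ℝ) ^ k / (Nat.factorial (k + 1) : ℝ) with hadef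
        set Bcon : ℝ → L := fun t => ∑ k ∈ Finset.range s, a k • g k t with hBcondef
        have hBconsm : ContDiff ℝ ∞ Bcon :=
          ContDiff.sum fun k _ => (hgsmooth k).const_smul (a k)
        have hBconV : ∀ t, Bcon t ∈ V 1 := fun t => hconstraint t
        have hBconD : iteratedDeriv n Bcon 0 ∈ V 1 :=
          aux_iteratedDeriv_mem (V 1) hBconsm hBconV n 0
        have hSsm : ContDiff ℝ ∞ (fun t => ∑ k ∈ Finset.Ico 1 s, a k • g k t) :=
          ContDiff.sum fun k _ => (hgsmooth k).const_smul (a k)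
        have hsplit : deriv c = fun t => Bcon t - ∑ k ∈ Finset.Ico 1 s, a k • g k t := by
          funext t
          have hrange : Bcon t = a 0 • g 0 t + ∑ k ∈ Finset.Ico 1 s, a k • g k t := by
            rw [hBcondef]
            simp only
            rw [Finset.range_eq_Ico, Finset.sum_eq_sum_Ico_succ_bot hs]
          have ha0 : a 0 = 1 := by simp [hadef]
          have hg0 : g 0 t = deriv c t := rfl
          rw [hrange, ha0, one_smul, hg0]
          abel
        have hDsplit : iteratedDeriv (n + 1) c 0
            = iteratedDeriv n Bcon 0
              - ∑ k ∈ Finset.Ico 1 s, a k • iteratedDeriv n (g k) 0 := by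
          rw [iteratedDeriv_succ', hsplit,
            aux_iteratedDeriv_sub hBconsm hSsm n 0,
            aux_iteratedDeriv_sum (Finset.Ico 1 s) (fun k t => a k • g k t)
              (fun k _ => (hgsmooth k).const_smul (a k)) n 0]
          congr 1
          refine Finset.sum_congr rfl fun k _ => ?_
          exact aux_iteratedDeriv_smul (a k) (hgsmooth k) n 0
        rw [hDsplit]
        refine Submodule.sub_mem _ ?_ (Submodule.sum_mem _ fun k hk => ?_)
        · refine hVW le_rfl ?_ hBconD
          simp only [hedef]; split_ifs <;> omega
        · rw [Finset.mem_Ico] at hk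
          refine Submodule.smul_mem _ _ ?_
          have hgk : iteratedDeriv n (g k) 0 ∈ W n := by
            obtain ⟨k', rfl⟩ : ∃ k', k = k' + 1 := ⟨k - 1, by omega⟩
            have hgh : g (k' + 1) = fun t => (fun w => bracket (c t) w)^[k'] (h t) :=
              funext fun t => Function.iterate_succ_apply _ k' _
            rw [hgh]
            exact hAmem n hcD h hhsmooth (hhmem n hcD) k' n le_rfl
          refine hWmono ?_ hgk
          simp only [hedef]; split_ifs <;> omega
  -- conclusion
  intro k r hr
  show iteratedDeriv (k + r) (g k) 0 ∈ W (k + r)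
  rcases Nat.eq_zero_or_pos k with rfl | hk
  · have hg0 : g 0 = deriv c := rfl
    have h2 : iteratedDeriv (0 + r) (g 0) 0 = iteratedDeriv (r + 1) c 0 := by
      rw [hg0, Nat.zero_add, ← iteratedDeriv_succ']
    rw [h2]
    refine hWmono ?_ (keyA (r + 1))
    simp only [hedef]; split_ifs <;> omega
  · obtain ⟨k', rfl⟩ : ∃ k', k = k' + 1 := ⟨k - 1, by omega⟩
    have hcD : ∀ j, j ≤ k' + 1 + r → iteratedDeriv j c 0 ∈ W (e j) := fun j _ => keyA j
    have hgh : g (k' + 1) = fun t => (fun w => bracket (c t) w)^[k'] (h t) :=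
      funext fun t => Function.iterate_succ_apply _ k' _
    rw [hgh]
    exact hAmem (k' + 1 + r) hcD h hhsmooth (hhmem _ hcD) k' (k' + 1 + r) le_rfl
end

section
/- Let L be a finite-dimensional real Lie algebra, let s ≥ 1 be an integer, and let V₁, …, V_s be linear subspaces of L with L = V₁ ⊕ ⋯ ⊕ V_s and [V_i, V_j] ⊆ V_{i+j} for all i, j ≥ 1, where V_l := {0} for l ≥ s+1. Let c : ℝ → L be a smooth (C^∞) curve with c(0) = 0 such that for every t ∈ ℝ, Σ_{k=0}^{s−1} ((−1)^k/(k+1)!) · ad_{c(t)}^k( c'(t) ) ∈ V₁. Then c'(0) ∈ V₁, and for every integer l ≥ 2 the l-th derivative of c at t = 0 belongs to the subspace V₁ + V₂ + ⋯ + V_{l−1}. -/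
open Finset
open scoped ContDiff


namespace CarnotAux

variable {L : Type*} [NormedAddCommGroup L] [NormedSpace ℝ L]

lemma hasDerivAt_bilin (B : L →L[ℝ] L →L[ℝ] L) {f g : ℝ → L} {f' g' : L} {t : ℝ}
    (hf : HasDerivAt f f' t) (hg : HasDerivAt g g' t) :
    HasDerivAt (fun x => B (f x) (g x)) (B f' (g t) + B (f t) g') t :=
  (B.hasFDerivAt.comp_hasDerivAt t hf).clm_apply hg

lemma contDiff_bilin (B : L →L[ℝ] L →L[ℝ] L) {f g : ℝ → L}
    (hf : ContDiff ℝ ∞ f) (hg : ContDiff ℝ ∞ g) :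
    ContDiff ℝ ∞ (fun x => B (f x) (g x)) :=
  (B.contDiff.comp hf).clm_apply hg

lemma deriv_bilin (B : L →L[ℝ] L →L[ℝ] L) {f g : ℝ → L}
    (hf : Differentiable ℝ f) (hg : Differentiable ℝ g) :
    deriv (fun x => B (f x) (g x))
      = fun x => B (deriv f x) (g x) + B (f x) (deriv g x) :=
  funext fun t => (hasDerivAt_bilin B ((hf t).hasDerivAt) ((hg t).hasDerivAt)).deriv

lemma iteratedDeriv_add' {f g : ℝ → L} (hf : ContDiff ℝ ∞ f) (hg : ContDiff ℝ ∞ g)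
    (n : ℕ) (t : ℝ) :
    iteratedDeriv n (fun x => f x + g x) t = iteratedDeriv n f t + iteratedDeriv n g t := by
  have h1 : ContDiffOn ℝ n f Set.univ := (hf.of_le (by exact_mod_cast le_top)).contDiffOn
  have h2 : ContDiffOn ℝ n g Set.univ := (hg.of_le (by exact_mod_cast le_top)).contDiffOn
  simpa [iteratedDerivWithin_univ] using
    iteratedDerivWithin_fun_add (Set.mem_univ t) uniqueDiffOn_univ (h1 t (Set.mem_univ t)) (h2 t (Set.mem_univ t))

lemma iteratedDeriv_zero_fun (n : ℕ) (t : ℝ) :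
    iteratedDeriv n (fun _ : ℝ => (0 : L)) t = 0 := by
  simp [iteratedDeriv_eq_iteratedFDeriv, iteratedFDeriv_zero_fun]

lemma iteratedDeriv_finset_sum {ι : Type*} (sf : Finset ι) {f : ι → ℝ → L}
    (hf : ∀ i ∈ sf, ContDiff ℝ ∞ (f i)) (n : ℕ) (t : ℝ) :
    iteratedDeriv n (fun x => ∑ i ∈ sf, f i x) t = ∑ i ∈ sf, iteratedDeriv n (f i) t := by
  classical
  induction sf using Finset.induction with
  | empty => simpa using iteratedDeriv_zero_fun (L := L) n t
  | @insert a sf ha ih =>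
    have hfa : ContDiff ℝ ∞ (f a) := hf a (mem_insert_self a sf)
    have hfs : ContDiff ℝ ∞ (fun x => ∑ i ∈ sf, f i x) :=
      ContDiff.sum fun i hi => hf i (mem_insert_of_mem hi)
    have hcongr : iteratedDeriv n (fun x => ∑ i ∈ insert a sf, f i x) t
        = iteratedDeriv n (fun x => f a x + ∑ i ∈ sf, f i x) t := by
      congr 1; funext x; rw [Finset.sum_insert ha]
    rw [hcongr, iteratedDeriv_add' hfa hfs, ih (fun i hi => hf i (mem_insert_of_mem hi)),
      Finset.sum_insert ha]

lemma deriv_mem_of_mem [FiniteDimensional ℝ L] (p : Submodule ℝ L) {f : ℝ → L}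
    (hf : Differentiable ℝ f) (h : ∀ t, f t ∈ p) (t : ℝ) : deriv f t ∈ p := by
  have hclosed : IsClosed (p : Set L) := p.closed_of_finiteDimensional
  have hd := hasDerivAt_iff_tendsto_slope.mp (hf t).hasDerivAt
  refine hclosed.mem_of_tendsto hd ?_
  filter_upwards with x
  exact p.smul_mem _ (p.sub_mem (h x) (h t))

lemma iteratedDeriv_mem_of_mem [FiniteDimensional ℝ L] (p : Submodule ℝ L) {f : ℝ → L}
    (hf : ContDiff ℝ ∞ f) (h : ∀ t, f t ∈ p) (n : ℕ) (t : ℝ) :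
    iteratedDeriv n f t ∈ p := by
  induction n generalizing f with
  | zero => simpa using h t
  | succ n ih =>
    rw [iteratedDeriv_succ']
    exact ih (contDiff_infty_iff_deriv.mp hf).2
      (fun x => deriv_mem_of_mem p (contDiff_infty_iff_deriv.mp hf).1 h x)

lemma binom_sum (T : ℕ → L) (n : ℕ) :
    ∑ j ∈ range (n + 1), (n.choose j : ℝ) • T (j + 1)
      + ∑ j ∈ range (n + 1), (n.choose j : ℝ) • T j
    = ∑ j ∈ range (n + 2), ((n + 1).choose j : ℝ) • T j := by
  rw [Finset.sum_range_succ' (fun j => (((n + 1).choose j : ℕ) : ℝ) • T j) (n + 1)]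
  rw [Finset.sum_range_succ' (fun j => ((n.choose j : ℕ) : ℝ) • T j) n]
  have h1 : ∀ j : ℕ, (((n + 1).choose (j + 1) : ℕ) : ℝ) = (n.choose j : ℝ) + (n.choose (j + 1) : ℝ) := by
    intro j
    rw [Nat.choose_succ_succ]
    push_cast
    ring
  simp only [h1, add_smul, Finset.sum_add_distrib]
  rw [Finset.sum_range_succ (fun j => ((n.choose (j + 1) : ℕ) : ℝ) • T (j + 1)) n]
  simp [Nat.choose_succ_self]
  abel

lemma leibniz (B : L →L[ℝ] L →L[ℝ] L) {f g : ℝ → L}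
    (hf : ContDiff ℝ ∞ f) (hg : ContDiff ℝ ∞ g) (n : ℕ) (t : ℝ) :
    iteratedDeriv n (fun x => B (f x) (g x)) t
      = ∑ j ∈ range (n + 1),
          (n.choose j : ℝ) • B (iteratedDeriv j f t) (iteratedDeriv (n - j) g t) := by
  induction n generalizing f g with
  | zero => simp
  | succ n ih =>
    have hf1 := contDiff_infty_iff_deriv.mp hf
    have hg1 := contDiff_infty_iff_deriv.mp hg
    rw [iteratedDeriv_succ', deriv_bilin B hf1.1 hg1.1]
    rw [iteratedDeriv_add' (contDiff_bilin B hf1.2 hg) (contDiff_bilin B hf hg1.2) n t]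
    rw [ih hf1.2 hg, ih hf hg1.2]
    simp only [← iteratedDeriv_succ']
    have e2 : ∑ j ∈ range (n + 1),
          (n.choose j : ℝ) • B (iteratedDeriv j f t) (iteratedDeriv (n - j + 1) g t)
        = ∑ j ∈ range (n + 1),
          (n.choose j : ℝ) • B (iteratedDeriv j f t) (iteratedDeriv (n + 1 - j) g t) := by
      refine Finset.sum_congr rfl fun j hj => ?_
      have : j ≤ n := by simpa [Nat.lt_succ_iff] using hj
      rw [show n - j + 1 = n + 1 - j by omega]
    rw [e2]
    have e1 : ∑ j ∈ range (n + 1),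
          (n.choose j : ℝ) • B (iteratedDeriv (j + 1) f t) (iteratedDeriv (n - j) g t)
        = ∑ j ∈ range (n + 1),
          (n.choose j : ℝ) • B (iteratedDeriv (j + 1) f t) (iteratedDeriv (n + 1 - (j + 1)) g t) := by
      simp [Nat.succ_sub_succ]
    rw [e1]
    exact binom_sum (fun j => B (iteratedDeriv j f t) (iteratedDeriv (n + 1 - j) g t)) n

end CarnotAux



namespace CarnotAux2

variable {L : Type*} [NormedAddCommGroup L] [NormedSpace ℝ L]

lemma W_mono (V : ℕ → Submodule ℝ L) {m m' : ℕ} (h : m ≤ m') :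
    (⨆ i ∈ Finset.Icc 1 m, V i) ≤ ⨆ i ∈ Finset.Icc 1 m', V i :=
  biSup_mono fun i hi => by
    simp only [Finset.mem_Icc] at hi ⊢; omega

lemma V_le_W (V : ℕ → Submodule ℝ L) {i m : ℕ} (h1 : 1 ≤ i) (h2 : i ≤ m) :
    V i ≤ ⨆ i ∈ Finset.Icc 1 m, V i :=
  le_biSup V (Finset.mem_Icc.mpr ⟨h1, h2⟩)

lemma bracket_mem_biSup (bracket : L →ₗ[ℝ] L →ₗ[ℝ] L) (V : ℕ → Submodule ℝ L)
    (hgrading : ∀ i j : ℕ, 1 ≤ i → 1 ≤ j → ∀ x ∈ V i, ∀ y ∈ V j, bracket x y ∈ V (i + j))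
    (a b : ℕ) {x y : L} (hx : x ∈ ⨆ i ∈ Finset.Icc 1 a, V i)
    (hy : y ∈ ⨆ i ∈ Finset.Icc 1 b, V i) :
    bracket x y ∈ ⨆ i ∈ Finset.Icc 1 (a + b), V i := by
  refine Submodule.iSup_induction (fun i => ⨆ _ : i ∈ Finset.Icc 1 a, V i)
    (motive := fun x => bracket x y ∈ ⨆ i ∈ Finset.Icc 1 (a + b), V i) hx ?_ ?_ ?_
  · intro i x hxi
    replace hxi : x ∈ ⨆ _ : i ∈ Finset.Icc 1 a, V i := hxi
    by_cases hi : i ∈ Finset.Icc 1 a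
    · rw [iSup_pos hi] at hxi
      refine Submodule.iSup_induction (fun j => ⨆ _ : j ∈ Finset.Icc 1 b, V j)
        (motive := fun z => bracket x z ∈ ⨆ i ∈ Finset.Icc 1 (a + b), V i) hy ?_ ?_ ?_
      · intro j z hzj
        replace hzj : z ∈ ⨆ _ : j ∈ Finset.Icc 1 b, V j := hzj
        by_cases hj : j ∈ Finset.Icc 1 b
        · rw [iSup_pos hj] at hzj
          simp only [Finset.mem_Icc] at hi hj
          exact V_le_W V (by omega) (by omega)
            (hgrading i j hi.1 hj.1 x hxi z hzj)
        · rw [iSup_neg hj] at hzj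
          rw [Submodule.mem_bot] at hzj
          subst hzj
          simp only [map_zero]
          exact Submodule.zero_mem _
      · show (bracket x) 0 ∈ _
        rw [map_zero]; exact Submodule.zero_mem _
      · intro z1 z2 h1 h2
        show (bracket x) (z1 + z2) ∈ _
        rw [map_add]
        exact Submodule.add_mem _ h1 h2
    · rw [iSup_neg hi] at hxi
      rw [Submodule.mem_bot] at hxi
      subst hxi
      rw [LinearMap.map_zero₂]
      exact Submodule.zero_mem _
  · show (bracket 0) y ∈ _
    rw [LinearMap.map_zero₂]
    exact Submodule.zero_mem _
  · intro x1 x2 h1 h2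
    show (bracket (x1 + x2)) y ∈ _
    rw [LinearMap.map_add₂]
    exact Submodule.add_mem _ h1 h2

end CarnotAux2


/-- In a stratified (Carnot) Lie algebra `L = V₁ ⊕ ⋯ ⊕ V_s` with `[V_i, V_j] ⊆ V_{i+j}`, if a
smooth curve `c` with `c 0 = 0` satisfies the normal geodesic constraint
`∑_{k=0}^{s-1} ((-1)^k/(k+1)!) ad_{c(t)}^[k] (c'(t)) ∈ V₁` for all `t`, then `c'(0) ∈ V₁` and the
`l`-th derivative of `c` at `0` lies in `V₁ + ⋯ + V_{l-1}` for every `l ≥ 2`. -/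
theorem iteratedDeriv_curve_mem_graded
    (L : Type*) [NormedAddCommGroup L] [NormedSpace ℝ L] [FiniteDimensional ℝ L]
    (bracket : L →ₗ[ℝ] L →ₗ[ℝ] L)
    (halt : ∀ v : L, bracket v v = 0)
    (hjacobi : ∀ u v w : L,
      bracket u (bracket v w) + bracket v (bracket w u) + bracket w (bracket u v) = 0)
    (s : ℕ) (hs : 1 ≤ s) (V : ℕ → Submodule ℝ L)
    (hdirect : DirectSum.IsInternal (fun i : Fin s => V (i.1 + 1)))
    (htriv : ∀ l : ℕ, s + 1 ≤ l → V l = ⊥)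
    (hgrading : ∀ i j : ℕ, 1 ≤ i → 1 ≤ j → ∀ x ∈ V i, ∀ y ∈ V j, bracket x y ∈ V (i + j))
    (c : ℝ → L) (hc : ContDiff ℝ (⊤ : ℕ∞) c) (hc0 : c 0 = 0)
    (hconstraint : ∀ t : ℝ,
      (∑ k ∈ Finset.range s, ((-1 : ℝ) ^ k / (Nat.factorial (k + 1) : ℝ)) •
        ((fun w => bracket (c t) w)^[k] (deriv c t))) ∈ V 1) :
    deriv c 0 ∈ V 1 ∧
      ∀ l : ℕ, 2 ≤ l → iteratedDeriv l c 0 ∈ ⨆ i ∈ Finset.Icc 1 (l - 1), V i := by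
  classical
  -- a continuous-linear-map version of the bracket
  let B1 : L →ₗ[ℝ] (L →L[ℝ] L) :=
    { toFun := fun x => LinearMap.toContinuousLinearMap (bracket x)
      map_add' := by intro x y; ext z; simp [LinearMap.map_add₂]
      map_smul' := by intro r x; ext z; simp [LinearMap.map_smul₂] }
  let B : L →L[ℝ] (L →L[ℝ] L) := LinearMap.toContinuousLinearMap B1
  have hB : ∀ x y : L, B x y = bracket x y := fun x y => rfl
  have hc8 : ContDiff ℝ ∞ c := hc.of_le (by simp)
  have hderivc : ContDiff ℝ ∞ (deriv c) := (contDiff_infty_iff_deriv.mp hc8).2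
  set g : ℕ → ℝ → L := fun k t => (fun w => bracket (c t) w)^[k] (deriv c t) with hgdef
  have hg0eq : g 0 = deriv c := by funext t; simp [hgdef]
  have hgsucc : ∀ k t, g (k + 1) t = B (c t) (g k t) := by
    intro k t
    rw [hB]
    simp only [hgdef]
    exact Function.iterate_succ_apply' _ _ _
  have hgsmooth : ∀ k, ContDiff ℝ ∞ (g k) := by
    intro k
    induction k with
    | zero => rw [hg0eq]; exact hderivc
    | succ k ih =>
      have hrw : g (k + 1) = fun t => B (c t) (g k t) := funext fun t => hgsucc k t
      rw [hrw]
      exact CarnotAux.contDiff_bilin B hc8 ih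
  -- Part 1 : the first derivative at 0 lies in V 1
  have hpart1 : deriv c 0 ∈ V 1 := by
    have h0 := hconstraint 0
    have h0mem : (0 : ℕ) ∈ Finset.range s := Finset.mem_range.mpr (by omega)
    have hz : ∀ k ∈ Finset.range s, k ≠ 0 →
        ((-1 : ℝ) ^ k / (Nat.factorial (k + 1) : ℝ)) •
          ((fun w => bracket (c 0) w)^[k] (deriv c 0)) = 0 := by
      intro k _ hk
      obtain ⟨k, rfl⟩ := Nat.exists_eq_succ_of_ne_zero hk
      rw [Function.iterate_succ_apply', hc0, LinearMap.map_zero₂, smul_zero]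
    rw [Finset.sum_eq_single 0 hz (fun h => absurd h0mem h)] at h0
    simpa using h0
  refine ⟨hpart1, ?_⟩
  intro l
  induction l using Nat.strong_induction_on with
  | _ l IH =>
  intro hl
  obtain ⟨N, rfl⟩ : ∃ N, l = N + 1 := ⟨l - 1, by omega⟩
  simp only [Nat.add_sub_cancel]
  have hN1 : 1 ≤ N := by omega
  -- induction-provided facts about lower derivatives of c
  have hcj : ∀ j, 2 ≤ j → j ≤ N → iteratedDeriv j c 0 ∈ ⨆ i ∈ Finset.Icc 1 (j - 1), V i :=
    fun j h2 hj => IH j (by omega) h2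
  have hbr : ∀ (a b : ℕ) {x y : L}, x ∈ (⨆ i ∈ Finset.Icc 1 a, V i) →
      y ∈ (⨆ i ∈ Finset.Icc 1 b, V i) → B x y ∈ ⨆ i ∈ Finset.Icc 1 (a + b), V i := by
    intro a b x y hx hy
    rw [hB]
    exact CarnotAux2.bracket_mem_biSup bracket V hgrading a b hx hy
  have hc1W : deriv c 0 ∈ ⨆ i ∈ Finset.Icc 1 1, V i :=
    CarnotAux2.V_le_W V le_rfl le_rfl hpart1
  -- the key estimate for the iterated brackets
  have hGK : ∀ k, 1 ≤ k → g k 0 = 0 ∧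
      ∀ n, 1 ≤ n → n ≤ N → iteratedDeriv n (g k) 0 ∈ ⨆ i ∈ Finset.Icc 1 n, V i := by
    intro k hk
    induction k, hk using Nat.le_induction with
    | base =>
      constructor
      · have h10 : g 1 0 = B (c 0) (g 0 0) := hgsucc 0 0
        rw [h10, hc0]
        simp
      · intro n hn1 hnN
        have hrw : g 1 = fun t => B (c t) (deriv c t) := by
          funext t
          have h1t : g 1 t = B (c t) (g 0 t) := hgsucc 0 t
          rw [h1t, hg0eq]
        rw [hrw, CarnotAux.leibniz B hc8 hderivc n 0]
        refine Submodule.sum_mem _ fun j hj => ?_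
        rw [Finset.mem_range, Nat.lt_succ_iff] at hj
        refine Submodule.smul_mem _ _ ?_
        rcases Nat.eq_zero_or_pos j with rfl | hj1
        · simp only [iteratedDeriv_zero, hc0, map_zero, ContinuousLinearMap.zero_apply]
          exact Submodule.zero_mem _
        · have hsecond : iteratedDeriv (n - j) (deriv c) 0 = iteratedDeriv (n - j + 1) c 0 := by
            rw [iteratedDeriv_succ']
          rw [hsecond]
          by_cases hj2 : 2 ≤ j
          · have h1 : iteratedDeriv j c 0 ∈ ⨆ i ∈ Finset.Icc 1 (j - 1), V i :=
              hcj j hj2 (le_trans hj hnN)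
            by_cases hm : n - j + 1 = 1
            · rw [hm, iteratedDeriv_one]
              exact CarnotAux2.W_mono V (by omega) (hbr (j - 1) 1 h1 hc1W)
            · have h2 : iteratedDeriv (n - j + 1) c 0 ∈ ⨆ i ∈ Finset.Icc 1 (n - j + 1 - 1), V i :=
                hcj _ (by omega) (by omega)
              exact CarnotAux2.W_mono V (by omega) (hbr _ _ h1 h2)
          · have hj1' : j = 1 := by omega
            subst hj1'
            by_cases hn2 : 2 ≤ n
            · have h2 : iteratedDeriv (n - 1 + 1) c 0 ∈ ⨆ i ∈ Finset.Icc 1 (n - 1 + 1 - 1), V i :=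
                hcj _ (by omega) (by omega)
              rw [iteratedDeriv_one]
              exact CarnotAux2.W_mono V (by omega) (hbr 1 _ hc1W h2)
            · have hn1' : n = 1 := by omega
              subst hn1'
              rw [iteratedDeriv_one]
              rw [hB, halt]
              exact Submodule.zero_mem _
    | succ k hk1 ihk =>
      obtain ⟨ihk0, ihkn⟩ := ihk
      constructor
      · rw [hgsucc k 0, hc0]
        simp
      · intro n hn1 hnN
        have hrw : g (k + 1) = fun t => B (c t) (g k t) := funext fun t => hgsucc k t
        rw [hrw, CarnotAux.leibniz B hc8 (hgsmooth k) n 0]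
        refine Submodule.sum_mem _ fun j hj => ?_
        rw [Finset.mem_range, Nat.lt_succ_iff] at hj
        refine Submodule.smul_mem _ _ ?_
        rcases Nat.eq_zero_or_pos j with rfl | hj1
        · simp only [iteratedDeriv_zero, hc0, map_zero, ContinuousLinearMap.zero_apply]
          exact Submodule.zero_mem _
        · by_cases hjn : j = n
          · subst hjn
            rw [show j - j = 0 from by omega, iteratedDeriv_zero, ihk0,
              (B (iteratedDeriv j c 0)).map_zero]
            exact Submodule.zero_mem _
          · have h2 : iteratedDeriv (n - j) (g k) 0 ∈ ⨆ i ∈ Finset.Icc 1 (n - j), V i :=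
              ihkn (n - j) (by omega) (by omega)
            by_cases hj2 : 2 ≤ j
            · have h1 : iteratedDeriv j c 0 ∈ ⨆ i ∈ Finset.Icc 1 (j - 1), V i :=
                hcj j hj2 (by omega)
              exact CarnotAux2.W_mono V (by omega) (hbr _ _ h1 h2)
            · have hj1' : j = 1 := by omega
              subst hj1'
              rw [iteratedDeriv_one]
              exact CarnotAux2.W_mono V (by omega) (hbr 1 _ hc1W h2)
  -- assemble: differentiate the constraint N times at 0
  set a : ℕ → ℝ := fun k => (-1 : ℝ) ^ k / (Nat.factorial (k + 1) : ℝ) with ha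
  have hFsmooth : ContDiff ℝ ∞ (fun t => ∑ k ∈ Finset.range s, a k • g k t) :=
    ContDiff.sum fun k _ => (hgsmooth k).const_smul (a k)
  have hFmem : ∀ t, (∑ k ∈ Finset.range s, a k • g k t) ∈ V 1 := by
    intro t
    rw [ha]
    simp only [hgdef]
    exact hconstraint t
  have hFN : iteratedDeriv N (fun t => ∑ k ∈ Finset.range s, a k • g k t) 0 ∈ V 1 :=
    CarnotAux.iteratedDeriv_mem_of_mem (V 1) hFsmooth hFmem N 0
  have hsum : iteratedDeriv N (fun t => ∑ k ∈ Finset.range s, a k • g k t) 0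
      = ∑ k ∈ Finset.range s, a k • iteratedDeriv N (g k) 0 := by
    rw [CarnotAux.iteratedDeriv_finset_sum (Finset.range s)
      (fun k _ => (hgsmooth k).const_smul (a k)) N 0]
    refine Finset.sum_congr rfl fun k _ => ?_
    have hsm : ContDiffOn ℝ N (g k) Set.univ :=
      ((hgsmooth k).of_le (by exact_mod_cast le_top)).contDiffOn
    simpa [iteratedDerivWithin_univ] using
      iteratedDerivWithin_const_smul (Set.mem_univ (0 : ℝ)) uniqueDiffOn_univ (a k) hsm
  have h0mem : (0 : ℕ) ∈ Finset.range s := Finset.mem_range.mpr (by omega)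
  rw [← Finset.add_sum_erase _ _ h0mem] at hsum
  have ha0 : a 0 = 1 := by simp [ha]
  have hg0 : iteratedDeriv N (g 0) 0 = iteratedDeriv (N + 1) c 0 := by
    rw [hg0eq, ← iteratedDeriv_succ']
  rw [ha0, one_smul, hg0] at hsum
  have hkey : iteratedDeriv (N + 1) c 0
      = iteratedDeriv N (fun t => ∑ k ∈ Finset.range s, a k • g k t) 0
        - ∑ k ∈ (Finset.range s).erase 0, a k • iteratedDeriv N (g k) 0 := by
    rw [hsum]
    abel
  rw [hkey]
  refine Submodule.sub_mem _ (CarnotAux2.V_le_W V le_rfl hN1 hFN) ?_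
  refine Submodule.sum_mem _ fun k hk => ?_
  have hk1 : 1 ≤ k := by
    rcases Finset.mem_erase.mp hk with ⟨hne, _⟩
    omega
  exact Submodule.smul_mem _ _ ((hGK k hk1).2 N hN1 le_rfl)
end
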